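/- arXiv:2406.19203 — 7 statements merged into one kernel-verified Lean document; each statement's English description precedes it below -/
import Mathlib

section
/- Let q be odd and ψ a nontrivial additive character of F_q. For a, b, c ∈ F_q, the sum of ψ(-ax - by - cz) over all nonzero triples (x,y,z) ∈ F_q³ satisfying y² = xz equals: q² - 1 if a = b = c = 0; -1 if b² - 4ac = 0 and (a,c) ≠ (0,0); q - 1 if b² - 4ac is a nonzero square in F_q; and -q - 1 if b² - 4ac is a nonsquare in F_q. -/
/-!
Write `χ` for the quadratic character of `F` and `g = ∑ₜ χ(t) ψ(t)` for its Gauss sum.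
Detect the cone with additive characters: `q · [y² = xz] = ∑ᵤ ψ(u (y² - xz))`. For `u ≠ 0` the
sum over `z` forces `x = -c/u`, and the remaining sum over `y` is a quadratic Gauss sum
`χ(u) g ψ(-(b² - 4ac)/(4u))`; the term `u = 0` contributes `q³` exactly when `a = b = c = 0`.
Summing over `u` gives a second Gauss sum `χ(-(b² - 4ac)/4) g`, and `g² = χ(-1) q` collapses the
sum over the whole cone to `q² [a = b = c = 0] + q χ(b² - 4ac)`. Removing the origin subtracts 1.
-/

open scoped Classical
open Finset

lemma four_ne_zero_of_ringChar_ne_two {F : Type*} [Field F] (hF : ringChar F ≠ 2) :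
    (4 : F) ≠ 0 := by
  simpa [show (4 : F) = 2 ^ 2 by norm_num] using pow_ne_zero 2 (Ring.two_ne_zero hF)

section QuadraticGaussSum

variable {F : Type*} [Field F] [Fintype F] {R : Type*} [CommRing R]

noncomputable def quadraticCharCast (F R : Type*) [Field F] [Fintype F] [DecidableEq F]
    [CommRing R] : MulChar F R :=
  (quadraticChar F).ringHomComp (Int.castRingHom R)

@[simp]
lemma quadraticCharCast_apply (a : F) : quadraticCharCast F R a = quadraticChar F a := rfl

lemma quadraticCharCast_isQuadratic : (quadraticCharCast F R).IsQuadratic :=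
  (quadraticChar_isQuadratic F).comp _

lemma quadraticCharCast_inv (a : F) : quadraticCharCast F R a⁻¹ = quadraticCharCast F R a := by
  rw [← MulChar.inv_apply', quadraticCharCast_isQuadratic.inv]

lemma sum_comp_sq (hF : ringChar F ≠ 2) (f : F → R) :
    ∑ y, f (y ^ 2) = ∑ t, (quadraticCharCast F R t + 1) * f t := by
  rw [← Finset.sum_fiberwise_of_maps_to (g := (· ^ 2)) (t := univ) (fun y _ => mem_univ _)]
  refine sum_congr rfl fun t _ => ?_
  have hcard : (#{y : F | y ^ 2 = t} : R) = quadraticChar F t + 1 := by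
    have h := quadraticChar_card_sqrts hF t
    rw [Set.toFinset_ofPred] at h
    convert congrArg (Int.cast : ℤ → R) h using 1
    · norm_cast
    · push_cast; rfl
  rw [sum_congr rfl fun y hy => congrArg f (mem_filter.mp hy).2, sum_const, nsmul_eq_mul, hcard,
    quadraticCharCast_apply]

lemma sum_quadraticCharCast_mul_addChar_mul_inv (hF : ringChar F ≠ 2) (ψ : AddChar F R)
    (k : F) : ∑ u, quadraticCharCast F R u * ψ (k * u⁻¹) =
      quadraticCharCast F R k * gaussSum (quadraticCharCast F R) ψ := by
  rw [Fintype.sum_equiv (Equiv.inv F) _ (fun u => quadraticCharCast F R u * ψ (k * u))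
    fun u => by rw [Equiv.inv_apply, quadraticCharCast_inv]]
  rcases eq_or_ne k 0 with rfl | hk
  · have hsum := congrArg (Int.cast : ℤ → R) (quadraticChar_sum_zero hF)
    push_cast at hsum
    simpa only [zero_mul, AddChar.map_zero_eq_one, mul_one, MulChar.map_zero,
      quadraticCharCast_apply] using hsum
  · have hgauss := gaussSum_mulShift_eq (quadraticCharCast F R) ψ (Units.mk0 k hk)
    rwa [quadraticCharCast_isQuadratic.inv] at hgauss

variable [IsDomain R] {ψ : AddChar F R}

lemma sum_addChar_mul_add (hψ : ψ.IsPrimitive) (t s : F) :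
    ∑ u, ψ (u * t + s) = if t = 0 then (Fintype.card F : R) * ψ s else 0 := by
  simp only [AddChar.map_add_eq_mul, ← sum_mul, AddChar.sum_mulShift t hψ, Nat.cast_ite,
    Nat.cast_zero, ite_mul, zero_mul]

lemma sum_addChar_mul_sq (hF : ringChar F ≠ 2) (hψ : ψ.IsPrimitive) {u : F} (hu : u ≠ 0) :
    ∑ y, ψ (u * y ^ 2) = quadraticCharCast F R u * gaussSum (quadraticCharCast F R) ψ := by
  have hlin : ∑ t, ψ (u * t) = 0 := by simpa [mul_comm, hu] using AddChar.sum_mulShift u hψ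
  have hgauss := gaussSum_mulShift_eq (quadraticCharCast F R) ψ (Units.mk0 u hu)
  rw [quadraticCharCast_isQuadratic.inv] at hgauss
  rw [sum_comp_sq hF (fun t => ψ (u * t))]
  simp only [add_mul, one_mul, sum_add_distrib, hlin, add_zero]
  exact hgauss

lemma sum_addChar_quadratic (hF : ringChar F ≠ 2) (hψ : ψ.IsPrimitive) {u : F} (hu : u ≠ 0)
    (v w : F) : ∑ y, ψ (u * y ^ 2 + v * y + w) =
      ψ (w - v ^ 2 / (4 * u)) * (quadraticCharCast F R u * gaussSum (quadraticCharCast F R) ψ) := by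
  have h2 : (2 : F) ≠ 0 := Ring.two_ne_zero hF
  have h4 := four_ne_zero_of_ringChar_ne_two hF
  rw [← sum_addChar_mul_sq hF hψ hu, mul_sum]
  refine Fintype.sum_equiv (Equiv.addRight (v / (2 * u))) _ _ fun y => ?_
  rw [Equiv.coe_addRight, ← AddChar.map_add_eq_mul]
  congr 1
  field_simp
  ring

end QuadraticGaussSum

section Cone

variable {F : Type*} [Field F] [Fintype F] {R : Type*} [CommRing R] [IsDomain R]
  {ψ : AddChar F R}

lemma sum_addChar_cone_fourier_zero (hψ : ψ.IsPrimitive) (a b c : F) :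
    ∑ x, ∑ y, ∑ z, ψ (0 * (y ^ 2 - x * z) + (-(a * x) - b * y - c * z)) =
      if a = 0 ∧ b = 0 ∧ c = 0 then (Fintype.card F : R) ^ 3 else 0 := by
  have harg : ∀ x y z : F, ψ (0 * (y ^ 2 - x * z) + (-(a * x) - b * y - c * z)) =
      ψ (x * -a) * (ψ (y * -b) * ψ (z * -c)) := by
    intro x y z
    rw [← AddChar.map_add_eq_mul, ← AddChar.map_add_eq_mul]
    ring_nf
  simp only [harg, ← mul_sum, ← sum_mul, AddChar.sum_mulShift _ hψ, neg_eq_zero]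
  split_ifs <;> simp_all
  ring

lemma sum_addChar_cone_fourier_of_ne_zero (hF : ringChar F ≠ 2) (hψ : ψ.IsPrimitive) {u : F}
    (hu : u ≠ 0) (a b c : F) :
    ∑ x, ∑ y, ∑ z, ψ (u * (y ^ 2 - x * z) + (-(a * x) - b * y - c * z)) =
      Fintype.card F * quadraticCharCast F R u * ψ (-(b ^ 2 - 4 * a * c) / 4 * u⁻¹) *
        gaussSum (quadraticCharCast F R) ψ := by
  have harg : ∀ x y z : F, u * (y ^ 2 - x * z) + (-(a * x) - b * y - c * z) =
      z * -(u * x + c) + (u * y ^ 2 - b * y - a * x) := by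
    intro x y z
    ring
  have hx : ∀ x : F, -(u * x + c) = 0 ↔ -(c / u) = x := by
    intro x
    constructor <;> intro h
    · field_simp
      linear_combination h
    · subst h
      field_simp
      ring
  simp_rw [harg, sum_addChar_mul_add hψ, hx]
  rw [sum_comm]
  simp only [sum_ite_eq, mem_univ, if_true]
  have hquad : ∀ y, u * y ^ 2 - b * y - a * -(c / u) = u * y ^ 2 + -b * y + a * c / u := by
    intro y
    ring
  have hk : a * c / u - (-b) ^ 2 / (4 * u) = -(b ^ 2 - 4 * a * c) / 4 * u⁻¹ := by
    have h4 := four_ne_zero_of_ringChar_ne_two hF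
    field_simp
    ring
  rw [← mul_sum]
  simp_rw [hquad]
  rw [sum_addChar_quadratic hF hψ hu, hk]
  ring

theorem sum_addChar_over_cone [CharZero R] (hF : ringChar F ≠ 2) (hψ : ψ.IsPrimitive)
    (a b c : F) :
    ∑ x, ∑ y, ∑ z, (if y ^ 2 = x * z then ψ (-(a * x) - b * y - c * z) else 0) =
      (if a = 0 ∧ b = 0 ∧ c = 0 then (Fintype.card F : R) ^ 2 else 0) +
        Fintype.card F * quadraticCharCast F R (b ^ 2 - 4 * a * c) := by
  set q : R := (Fintype.card F : R)
  set χ := quadraticCharCast F R with hχ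
  set g := gaussSum χ ψ
  set k := -(b ^ 2 - 4 * a * c) / 4
  have hq : q ≠ 0 := Nat.cast_ne_zero.mpr Fintype.card_ne_zero
  have hg : g ^ 2 = χ (-1) * q :=
    gaussSum_sq ((MulChar.ringHomComp_ne_one_iff Int.cast_injective).mpr (quadraticChar_ne_one hF))
      quadraticCharCast_isQuadratic hψ
  have hχk : χ k * χ (-1) = χ (b ^ 2 - 4 * a * c) := by
    have h2 : (2 : F) ≠ 0 := Ring.two_ne_zero hF
    have h4 := four_ne_zero_of_ringChar_ne_two hF
    have hk : k * -1 = (b ^ 2 - 4 * a * c) * (2⁻¹) ^ 2 := by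
      simp only [k]
      field_simp
      ring
    rw [← map_mul, hk, map_mul, hχ, quadraticCharCast_apply (2⁻¹ ^ 2),
      quadraticChar_sq_one' (inv_ne_zero h2), Int.cast_one, mul_one]
  have hdetect : ∀ x y z, q * (if y ^ 2 = x * z then ψ (-(a * x) - b * y - c * z) else 0) =
      ∑ u, ψ (u * (y ^ 2 - x * z) + (-(a * x) - b * y - c * z)) := by
    intro x y z
    rw [sum_addChar_mul_add hψ, sub_eq_zero, mul_ite, mul_zero]
  have hfiber : ∀ u, ∑ x, ∑ y, ∑ z, ψ (u * (y ^ 2 - x * z) + (-(a * x) - b * y - c * z)) =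
      (if u = 0 then (if a = 0 ∧ b = 0 ∧ c = 0 then q ^ 3 else 0) else 0) +
        q * χ u * ψ (k * u⁻¹) * g := by
    intro u
    rcases eq_or_ne u 0 with rfl | hu
    · rw [sum_addChar_cone_fourier_zero hψ, if_pos rfl, MulChar.map_zero, mul_zero, zero_mul,
        zero_mul, add_zero]
    · rw [sum_addChar_cone_fourier_of_ne_zero hF hψ hu, if_neg hu, zero_add]
  apply mul_left_cancel₀ hq
  calc q * ∑ x, ∑ y, ∑ z, (if y ^ 2 = x * z then ψ (-(a * x) - b * y - c * z) else 0)
      = ∑ u, ∑ x, ∑ y, ∑ z, ψ (u * (y ^ 2 - x * z) + (-(a * x) - b * y - c * z)) := by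
        simp_rw [mul_sum, hdetect]
        rw [sum_congr rfl fun x _ => sum_comm_cycle, sum_comm]
    _ = (if a = 0 ∧ b = 0 ∧ c = 0 then q ^ 3 else 0) + q * g * ∑ u, χ u * ψ (k * u⁻¹) := by
        simp_rw [hfiber, sum_add_distrib, Fintype.sum_ite_eq', mul_sum]
        congr 1
        exact sum_congr rfl fun u _ => by ring
    _ = q * ((if a = 0 ∧ b = 0 ∧ c = 0 then q ^ 2 else 0) + q * χ (b ^ 2 - 4 * a * c)) := by
        rw [hχ, sum_quadraticCharCast_mul_addChar_mul_inv hF, ← hχ]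
        split_ifs <;> linear_combination (q * χ k) * hg + q ^ 2 * hχk

end Cone

lemma sum_ite_and_ne_zero_eq_sub {α M : Type*} [Fintype α] [DecidableEq α] [Zero α]
    [AddCommGroup M] (p : α → α → α → Prop) [∀ x y z, Decidable (p x y z)] (f : α → α → α → M)
    (h : p 0 0 0) :
    ∑ x, ∑ y, ∑ z, (if p x y z ∧ (x, y, z) ≠ ((0 : α), (0 : α), (0 : α)) then f x y z else 0) =
      ∑ x, ∑ y, ∑ z, (if p x y z then f x y z else 0) - f 0 0 0 := by
  have hpt : ∀ x y z, (if p x y z ∧ (x, y, z) ≠ ((0 : α), (0 : α), (0 : α)) then f x y z else 0) =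
      (if p x y z then f x y z else 0) - if x = 0 ∧ y = 0 ∧ z = 0 then f x y z else 0 := by
    intro x y z
    by_cases h0 : x = 0 ∧ y = 0 ∧ z = 0
    · obtain ⟨rfl, rfl, rfl⟩ := h0
      simp [h]
    · simp [h0]
  simp_rw [hpt, sum_sub_distrib]
  congr 1
  simp [ite_and]

theorem stmt1 {F : Type*} [Field F] [Fintype F] (hq : Odd (Fintype.card F))
    (ψ : AddChar F ℂ) (hψ : ψ ≠ 1) (a b c : F) :
    (∑ x : F, ∑ y : F, ∑ z : F,
        if y ^ 2 = x * z ∧ (x, y, z) ≠ ((0 : F), (0 : F), (0 : F))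
        then ψ (-(a * x) - b * y - c * z) else 0) =
      if a = 0 ∧ b = 0 ∧ c = 0 then (Fintype.card F : ℂ) ^ 2 - 1
      else if b ^ 2 - 4 * a * c = 0 ∧ (a, c) ≠ ((0 : F), (0 : F)) then -1
      else if IsSquare (b ^ 2 - 4 * a * c) then (Fintype.card F : ℂ) - 1
      else -(Fintype.card F : ℂ) - 1 := by
  have hF : ringChar F ≠ 2 := fun h =>
    Nat.not_even_iff_odd.mpr hq (Nat.even_iff.mpr (FiniteField.even_card_of_char_two h))
  rw [sum_ite_and_ne_zero_eq_sub (fun x y z => y ^ 2 = x * z) _ (by simp),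
    sum_addChar_over_cone hF (AddChar.IsPrimitive.of_ne_one hψ)]
  simp only [mul_zero, neg_zero, sub_zero, AddChar.map_zero_eq_one, quadraticCharCast_apply]
  split_ifs with h0 hD hsq
  · obtain ⟨rfl, rfl, rfl⟩ := h0
    simp
  · simp [hD.1]
  · have hD0 : b ^ 2 - 4 * a * c ≠ 0 := by
      intro hD0
      obtain ⟨rfl, rfl⟩ : a = 0 ∧ c = 0 := by simpa [hD0] using hD
      exact h0 ⟨rfl, by simpa using hD0, rfl⟩
    rw [(quadraticChar_one_iff_isSquare hD0).mpr hsq]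
    simp
  · rw [quadraticChar_neg_one_iff_not_isSquare.mpr hsq]
    simp
end

section
/- Let q be odd and ψ a nontrivial additive character of F_q. For a, b, c ∈ F_q, the sum of ψ(-ax - by - cz) over all triples (x,y,z) ∈ F_q³ with y² - xz a nonzero square equals: q(q²-1)/2 if a = b = c = 0; q(q-1)/2 if b² - 4ac = 0 and (a,c) ≠ (0,0); -q if b² - 4ac is a nonzero square; and 0 if b² - 4ac is a nonsquare. -/
set_option maxHeartbeats 1000000


open scoped Classical

theorem stmt2 {F : Type*} [Field F] [Fintype F] (hq : Odd (Fintype.card F))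
    (ψ : AddChar F ℂ) (hψ : ψ ≠ 1) (a b c : F) :
    (∑ x : F, ∑ y : F, ∑ z : F,
        if IsSquare (y ^ 2 - x * z) ∧ y ^ 2 - x * z ≠ 0
        then ψ (-(a * x) - b * y - c * z) else 0) =
      if a = 0 ∧ b = 0 ∧ c = 0 then
        (Fintype.card F : ℂ) * ((Fintype.card F : ℂ) ^ 2 - 1) / 2
      else if b ^ 2 - 4 * a * c = 0 ∧ (a, c) ≠ ((0 : F), (0 : F)) then
        (Fintype.card F : ℂ) * ((Fintype.card F : ℂ) - 1) / 2
      else if IsSquare (b ^ 2 - 4 * a * c) then -(Fintype.card F : ℂ)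
      else 0 := by
  classical
  have hF2 : ringChar F ≠ 2 := by
    intro h
    have h1 := FiniteField.even_card_of_char_two h
    have h2 := Nat.odd_iff.mp hq
    omega
  have h2F : (2 : F) ≠ 0 := Ring.two_ne_zero hF2
  have h4F : (4 : F) ≠ 0 := by
    have : (4 : F) = 2 * 2 := by norm_num
    rw [this]; exact mul_ne_zero h2F h2F
  have hψp : ψ.IsPrimitive := AddChar.IsPrimitive.of_ne_one hψ
  have hq0 : ((Fintype.card F : ℂ)) ≠ 0 := Nat.cast_ne_zero.mpr Fintype.card_ne_zero
  set χ : MulChar F ℂ := (quadraticChar F).ringHomComp (Int.castRingHom ℂ) with hχdef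
  have hχq : χ.IsQuadratic := (quadraticChar_isQuadratic F).comp _
  have hχ1 : χ ≠ 1 := by
    obtain ⟨u, hu⟩ := quadraticChar_exists_neg_one' hF2
    intro h
    have h1 : χ u = 1 := by rw [h, MulChar.one_apply_coe]
    rw [hχdef, MulChar.ringHomComp_apply, hu] at h1
    norm_num at h1
  set g : ℂ := gaussSum χ ψ with hgdef
  have hg2 : g ^ 2 = χ (-1) * (Fintype.card F : ℂ) := gaussSum_sq hχ1 hχq hψp
  have hg0 : g ≠ 0 := gaussSum_ne_zero_of_nontrivial hq0 hχ1 hψp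
  have hχ0 : χ (0 : F) = 0 := by simp [hχdef]
  have hχsq1 : ∀ t : F, t ≠ 0 → χ t * χ t = 1 := by
    intro t ht
    rw [← map_mul, ← sq, hχdef, MulChar.ringHomComp_apply, quadraticChar_sq_one' ht]
    norm_num
  have hχinv : ∀ t : F, t ≠ 0 → χ t⁻¹ = χ t := by
    intro t ht
    have h1 : χ t⁻¹ * χ t = 1 := by
      rw [← map_mul, inv_mul_cancel₀ ht, map_one]
    calc χ t⁻¹ = χ t⁻¹ * (χ t * χ t) := by rw [hχsq1 t ht, mul_one]
      _ = (χ t⁻¹ * χ t) * χ t := by ring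
      _ = χ t := by rw [h1, one_mul]
  -- key Gauss sum identity
  have key : ∀ t : F, ∑ s : F, χ s * ψ (t * s) = χ t * g := by
    intro t
    rcases eq_or_ne t 0 with rfl | ht
    · simp only [zero_mul, AddChar.map_zero_eq_one, mul_one, hχ0]
      exact MulChar.sum_eq_zero_of_ne_one hχ1
    · have h := gaussSum_mulShift χ ψ (Units.mk0 t ht)
      have h2 : gaussSum χ (ψ.mulShift ((Units.mk0 t ht) : F)) = ∑ s : F, χ s * ψ (t * s) := by
        simp [gaussSum, AddChar.mulShift_apply]
      rw [h2] at h
      have h3 : ((Units.mk0 t ht : F)) = t := rfl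
      rw [h3] at h
      calc ∑ s : F, χ s * ψ (t * s) = (χ t * χ t) * ∑ s : F, χ s * ψ (t * s) := by
            rw [hχsq1 t ht, one_mul]
        _ = χ t * g := by rw [mul_assoc, h]
  have psum : ∀ t : F, ∑ z : F, ψ (z * t) = if t = 0 then (Fintype.card F : ℂ) else 0 := by
    intro t
    rw [AddChar.sum_mulShift t hψp]
    split_ifs <;> simp
  -- sum of ψ(s y²)
  have sqsum : ∀ s : F, s ≠ 0 → ∑ y : F, ψ (s * y ^ 2) = χ s * g := by
    intro s hs
    have h1 : ∑ y : F, ψ (s * y ^ 2) = ∑ t : F, (({y : F | y ^ 2 = t}.toFinset.card : ℂ)) * ψ (s * t) := by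
      have h2 : ∀ y : F, ψ (s * y ^ 2) = ∑ t : F, if y ^ 2 = t then ψ (s * t) else 0 := by
        intro y
        rw [Finset.sum_ite_eq Finset.univ (y ^ 2) (fun t => ψ (s * t))]
        simp
      rw [Finset.sum_congr rfl fun y _ => h2 y, Finset.sum_comm]
      refine Finset.sum_congr rfl fun t _ => ?_
      rw [← Finset.sum_filter, Finset.sum_const, nsmul_eq_mul]
      congr 2
      refine (Finset.card_bij (fun y _ => y) ?_ ?_ ?_).symm
      · intro y hy
        simp only [Set.mem_toFinset, Set.mem_setOf_eq] at hy
        simp [hy]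
      · intro y _ y' _ h; exact h
      · intro y hy
        simp only [Finset.mem_filter, Finset.mem_univ, true_and] at hy
        exact ⟨y, by simp [Set.mem_toFinset, hy], rfl⟩
    have h3 : ∀ t : F, (({y : F | y ^ 2 = t}.toFinset.card : ℂ)) = χ t + 1 := by
      intro t
      have := quadraticChar_card_sqrts hF2 t
      have h4 : (({y : F | y ^ 2 = t}.toFinset.card : ℤ) : ℂ) = ((quadraticChar F t + 1 : ℤ) : ℂ) := by
        exact_mod_cast congrArg (fun n : ℤ => (n : ℂ)) this
      push_cast at h4
      rw [h4, hχdef, MulChar.ringHomComp_apply]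
      norm_num
    rw [h1, Finset.sum_congr rfl fun t _ => by rw [h3 t]]
    have h5 : ∑ t : F, (χ t + 1) * ψ (s * t) = (∑ t : F, χ t * ψ (s * t)) + ∑ t : F, ψ (s * t) := by
      rw [← Finset.sum_add_distrib]
      refine Finset.sum_congr rfl fun t _ => by ring
    rw [h5, key s]
    have h6 : ∑ t : F, ψ (s * t) = 0 := by
      have := psum s
      simp only [hs, if_false] at this
      rw [← this]
      exact Finset.sum_congr rfl fun t _ => by rw [mul_comm]
    rw [h6, add_zero]
  -- completing the square
  have csq : ∀ s : F, s ≠ 0 → ∑ y : F, ψ (s * y ^ 2 - b * y) = ψ (-(b ^ 2) / (4 * s)) * (χ s * g) := by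
    intro s hs
    have h0 : ∀ y : F, s * (y + b / (2 * s)) ^ 2 - b * (y + b / (2 * s)) = s * y ^ 2 + -(b ^ 2) / (4 * s) := by
      intro y; field_simp; ring
    calc ∑ y : F, ψ (s * y ^ 2 - b * y)
        = ∑ y : F, ψ (s * (y + b / (2 * s)) ^ 2 - b * (y + b / (2 * s))) := by
          refine (Fintype.sum_equiv (Equiv.addRight (b / (2 * s))) _ _ fun y => ?_).symm
          simp
      _ = ∑ y : F, ψ (s * y ^ 2) * ψ (-(b ^ 2) / (4 * s)) := by
          refine Finset.sum_congr rfl fun y _ => ?_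
          rw [h0 y, AddChar.map_add_eq_mul]
      _ = ψ (-(b ^ 2) / (4 * s)) * (χ s * g) := by
          rw [← Finset.sum_mul, sqsum s hs]; ring
  -- the master sum I
  set I : F → ℂ := fun s => ∑ x : F, ∑ y : F, ∑ z : F,
      ψ (s * (y ^ 2 - x * z) - a * x - b * y - c * z) with hIdef
  set E : F := a * c - b ^ 2 / 4 with hEdef
  have hIs : ∀ s : F, s ≠ 0 → I s = (Fintype.card F : ℂ) * ψ (E * s⁻¹) * (χ s * g) := by
    intro s hs
    have split : ∀ x y z : F, ψ (s * (y ^ 2 - x * z) - a * x - b * y - c * z)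
        = ψ (s * y ^ 2 - b * y) * ψ (z * (-(s * x + c)) + -(a * x)) := by
      intro x y z
      rw [← AddChar.map_add_eq_mul]
      congr 1
      ring
    have inner : ∀ x : F, ∑ z : F, ψ (z * (-(s * x + c)) + -(a * x))
        = ψ (-(a * x)) * (if -(s * x + c) = 0 then (Fintype.card F : ℂ) else 0) := by
      intro x
      simp only [AddChar.map_add_eq_mul]
      rw [← Finset.sum_mul, psum]
      ring
    have hcond : ∀ x : F, (-(s * x + c) = 0) ↔ (x = -(c / s)) := by
      intro x
      rw [neg_eq_zero, ← neg_div, eq_div_iff hs]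
      constructor
      · intro h; linear_combination h
      · intro h; linear_combination h
    calc I s = ∑ x : F, ∑ y : F, ∑ z : F,
            ψ (s * y ^ 2 - b * y) * ψ (z * (-(s * x + c)) + -(a * x)) := by
          simp only [hIdef]
          exact Finset.sum_congr rfl fun x _ => Finset.sum_congr rfl fun y _ =>
            Finset.sum_congr rfl fun z _ => split x y z
      _ = ∑ x : F, (∑ y : F, ψ (s * y ^ 2 - b * y)) *
            (ψ (-(a * x)) * (if -(s * x + c) = 0 then (Fintype.card F : ℂ) else 0)) := by
          refine Finset.sum_congr rfl fun x _ => ?_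
          rw [← inner x, Finset.sum_mul]
          exact Finset.sum_congr rfl fun y _ => by rw [Finset.mul_sum]
      _ = (∑ y : F, ψ (s * y ^ 2 - b * y)) *
            ∑ x : F, (if x = -(c / s) then ψ (-(a * x)) * (Fintype.card F : ℂ) else 0) := by
          rw [Finset.mul_sum]
          refine Finset.sum_congr rfl fun x _ => ?_
          rw [hcond x]
          split_ifs <;> ring
      _ = (Fintype.card F : ℂ) * ψ (E * s⁻¹) * (χ s * g) := by
          rw [Finset.sum_ite_eq' Finset.univ (-(c / s)) (fun x => ψ (-(a * x)) * (Fintype.card F : ℂ))]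
          simp only [Finset.mem_univ, if_true]
          rw [csq s hs]
          have harg : -(b ^ 2) / (4 * s) + -(a * -(c / s)) = E * s⁻¹ := by
            rw [hEdef]; field_simp; ring
          calc ψ (-(b ^ 2) / (4 * s)) * (χ s * g) * (ψ (-(a * -(c / s))) * (Fintype.card F : ℂ))
              = (ψ (-(b ^ 2) / (4 * s)) * ψ (-(a * -(c / s)))) * (Fintype.card F : ℂ) * (χ s * g) := by
                ring
            _ = (Fintype.card F : ℂ) * ψ (E * s⁻¹) * (χ s * g) := by
                rw [← AddChar.map_add_eq_mul, harg]; ring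
  have hI0 : I 0 = if a = 0 ∧ b = 0 ∧ c = 0 then (Fintype.card F : ℂ) ^ 3 else 0 := by
    have e1 : ∀ x y z : F, (0 : F) * (y ^ 2 - x * z) - a * x - b * y - c * z
        = x * -a + (y * -b + z * -c) := by intros; ring
    calc I 0 = ∑ x : F, ∑ y : F, ∑ z : F, ψ (x * -a) * (ψ (y * -b) * ψ (z * -c)) := by
          simp only [hIdef]
          refine Finset.sum_congr rfl fun x _ => Finset.sum_congr rfl fun y _ =>
            Finset.sum_congr rfl fun z _ => ?_
          rw [e1, AddChar.map_add_eq_mul, AddChar.map_add_eq_mul]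
      _ = (∑ x : F, ψ (x * -a)) * ((∑ y : F, ψ (y * -b)) * (∑ z : F, ψ (z * -c))) := by
          rw [Finset.sum_mul]
          refine Finset.sum_congr rfl fun x _ => ?_
          rw [Finset.sum_mul, Finset.mul_sum]
          refine Finset.sum_congr rfl fun y _ => ?_
          rw [Finset.mul_sum, Finset.mul_sum]
      _ = if a = 0 ∧ b = 0 ∧ c = 0 then (Fintype.card F : ℂ) ^ 3 else 0 := by
          rw [psum, psum, psum]
          rcases eq_or_ne a 0 with ha | ha
          · rcases eq_or_ne b 0 with hb | hb
            · rcases eq_or_ne c 0 with hc | hc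
              · simp only [ha, hb, hc, neg_zero, if_pos rfl, and_self, if_true]
                ring
              · simp [neg_eq_zero, ha, hb, hc]
            · simp [neg_eq_zero, ha, hb]
          · simp [neg_eq_zero, ha]
  -- 4-fold sum swap helper
  have swap : ∀ (f : F → F → F → F → ℂ),
      ∑ x : F, ∑ y : F, ∑ z : F, ∑ s : F, f x y z s
        = ∑ s : F, ∑ x : F, ∑ y : F, ∑ z : F, f x y z s := by
    intro f
    calc ∑ x : F, ∑ y : F, ∑ z : F, ∑ s : F, f x y z s
        = ∑ x : F, ∑ y : F, ∑ s : F, ∑ z : F, f x y z s :=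
          Finset.sum_congr rfl fun x _ => Finset.sum_congr rfl fun y _ => Finset.sum_comm
      _ = ∑ x : F, ∑ s : F, ∑ y : F, ∑ z : F, f x y z s :=
          Finset.sum_congr rfl fun x _ => Finset.sum_comm
      _ = ∑ s : F, ∑ x : F, ∑ y : F, ∑ z : F, f x y z s := Finset.sum_comm
  -- S1 : the chi-twisted sum
  set S1 : ℂ := ∑ x : F, ∑ y : F, ∑ z : F, χ (y ^ 2 - x * z) * ψ (-(a * x) - b * y - c * z)
    with hS1def
  have hgS1 : g * S1 = ∑ s : F, χ s * I s := by
    have h1 : ∀ x y z : F, g * (χ (y ^ 2 - x * z) * ψ (-(a * x) - b * y - c * z))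
        = ∑ s : F, χ s * ψ (s * (y ^ 2 - x * z) - a * x - b * y - c * z) := by
      intro x y z
      have h2 : ∀ s : F, χ s * ψ (s * (y ^ 2 - x * z) - a * x - b * y - c * z)
          = (χ s * ψ ((y ^ 2 - x * z) * s)) * ψ (-(a * x) - b * y - c * z) := by
        intro s
        rw [mul_assoc, ← AddChar.map_add_eq_mul]
        congr 2
        ring
      rw [Finset.sum_congr rfl fun s _ => h2 s, ← Finset.sum_mul, key (y ^ 2 - x * z)]
      ring
    calc g * S1 = ∑ x : F, ∑ y : F, ∑ z : F,
            ∑ s : F, χ s * ψ (s * (y ^ 2 - x * z) - a * x - b * y - c * z) := by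
          rw [hS1def, Finset.mul_sum]
          refine Finset.sum_congr rfl fun x _ => ?_
          rw [Finset.mul_sum]
          refine Finset.sum_congr rfl fun y _ => ?_
          rw [Finset.mul_sum]
          exact Finset.sum_congr rfl fun z _ => h1 x y z
      _ = ∑ s : F, ∑ x : F, ∑ y : F, ∑ z : F,
            χ s * ψ (s * (y ^ 2 - x * z) - a * x - b * y - c * z) :=
          swap _
      _ = ∑ s : F, χ s * I s := by
          refine Finset.sum_congr rfl fun s _ => ?_
          rw [hIdef, Finset.mul_sum]
          refine Finset.sum_congr rfl fun x _ => ?_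
          rw [Finset.mul_sum]
          refine Finset.sum_congr rfl fun y _ => ?_
          rw [Finset.mul_sum]
  -- sum over nonzero s with the inversion s ↦ s⁻¹
  have hinvbij : ∀ (f : F → ℂ), ∑ s ∈ Finset.univ.erase (0 : F), f s⁻¹
      = ∑ s ∈ Finset.univ.erase (0 : F), f s := by
    intro f
    refine Finset.sum_nbij' (fun s => s⁻¹) (fun s => s⁻¹) ?_ ?_ ?_ ?_ ?_
    · intro s hs
      simp only [Finset.mem_erase, Finset.mem_univ, and_true] at hs ⊢
      exact inv_ne_zero hs
    · intro s hs
      simp only [Finset.mem_erase, Finset.mem_univ, and_true] at hs ⊢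
      exact inv_ne_zero hs
    · intro s hs; simp
    · intro s hs; simp
    · intro s hs; simp
  have hsum1 : ∑ s : F, χ s * I s
      = (Fintype.card F : ℂ) * g * ((if E = 0 then (Fintype.card F : ℂ) else 0) - 1) := by
    have h0 : ∑ s : F, χ s * I s = ∑ s ∈ Finset.univ.erase (0 : F), χ s * I s := by
      rw [← Finset.add_sum_erase _ _ (Finset.mem_univ (0 : F)), hχ0, zero_mul, zero_add]
    rw [h0]
    have h1 : ∀ s ∈ Finset.univ.erase (0 : F),
        χ s * I s = (Fintype.card F : ℂ) * g * ψ (E * s⁻¹) := by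
      intro s hs
      have hs' : s ≠ 0 := Finset.ne_of_mem_erase hs
      rw [hIs s hs']
      calc χ s * ((Fintype.card F : ℂ) * ψ (E * s⁻¹) * (χ s * g))
          = (χ s * χ s) * ((Fintype.card F : ℂ) * g * ψ (E * s⁻¹)) := by ring
        _ = (Fintype.card F : ℂ) * g * ψ (E * s⁻¹) := by rw [hχsq1 s hs', one_mul]
    rw [Finset.sum_congr rfl h1, ← Finset.mul_sum]
    congr 1
    have h2 : ∑ s ∈ Finset.univ.erase (0 : F), ψ (E * s⁻¹)
        = ∑ s ∈ Finset.univ.erase (0 : F), ψ (E * s) := hinvbij (fun s => ψ (E * s))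
    rw [h2, Finset.sum_erase_eq_sub (Finset.mem_univ (0 : F))]
    have h3 : ∑ s : F, ψ (E * s) = if E = 0 then (Fintype.card F : ℂ) else 0 := by
      rw [← psum E]
      exact Finset.sum_congr rfl fun s _ => by rw [mul_comm]
    rw [h3]
    simp
  have hS1val : S1 = (Fintype.card F : ℂ) * ((if E = 0 then (Fintype.card F : ℂ) else 0) - 1) := by
    apply mul_left_cancel₀ hg0
    rw [hgS1, hsum1]
    ring
  -- T : the sum over the quadric y² = xz
  set T : ℂ := ∑ x : F, ∑ y : F, ∑ z : F,
      if y ^ 2 - x * z = 0 then ψ (-(a * x) - b * y - c * z) else 0 with hTdef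
  have hqT : (Fintype.card F : ℂ) * T = ∑ s : F, I s := by
    have h1 : ∀ x y z : F,
        (Fintype.card F : ℂ) * (if y ^ 2 - x * z = 0 then ψ (-(a * x) - b * y - c * z) else 0)
        = ∑ s : F, ψ (s * (y ^ 2 - x * z) - a * x - b * y - c * z) := by
      intro x y z
      have h2 : ∀ s : F, ψ (s * (y ^ 2 - x * z) - a * x - b * y - c * z)
          = ψ (s * (y ^ 2 - x * z)) * ψ (-(a * x) - b * y - c * z) := by
        intro s
        rw [← AddChar.map_add_eq_mul]
        congr 1
        ring
      rw [Finset.sum_congr rfl fun s _ => h2 s, ← Finset.sum_mul]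
      have h3 : ∑ s : F, ψ (s * (y ^ 2 - x * z))
          = if y ^ 2 - x * z = 0 then (Fintype.card F : ℂ) else 0 := by
        exact psum (y ^ 2 - x * z)
      rw [h3]
      split_ifs with h <;> ring
    calc (Fintype.card F : ℂ) * T = ∑ x : F, ∑ y : F, ∑ z : F,
            ∑ s : F, ψ (s * (y ^ 2 - x * z) - a * x - b * y - c * z) := by
          rw [hTdef, Finset.mul_sum]
          refine Finset.sum_congr rfl fun x _ => ?_
          rw [Finset.mul_sum]
          refine Finset.sum_congr rfl fun y _ => ?_
          rw [Finset.mul_sum]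
          exact Finset.sum_congr rfl fun z _ => h1 x y z
      _ = ∑ s : F, ∑ x : F, ∑ y : F, ∑ z : F,
            ψ (s * (y ^ 2 - x * z) - a * x - b * y - c * z) := swap _
      _ = ∑ s : F, I s := by
          exact Finset.sum_congr rfl fun s _ => rfl
  have hsum2 : ∑ s ∈ Finset.univ.erase (0 : F), I s
      = (Fintype.card F : ℂ) * g * (χ E * g) := by
    have h1 : ∀ s ∈ Finset.univ.erase (0 : F),
        I s = (Fintype.card F : ℂ) * g * (χ s⁻¹ * ψ (E * s⁻¹)) := by
      intro s hs
      have hs' : s ≠ 0 := Finset.ne_of_mem_erase hs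
      rw [hIs s hs', hχinv s hs']
      ring
    rw [Finset.sum_congr rfl h1, ← Finset.mul_sum]
    congr 1
    have h2 : ∑ s ∈ Finset.univ.erase (0 : F), χ s⁻¹ * ψ (E * s⁻¹)
        = ∑ s ∈ Finset.univ.erase (0 : F), χ s * ψ (E * s) :=
      hinvbij (fun s => χ s * ψ (E * s))
    rw [h2]
    have h3 : ∑ s ∈ Finset.univ.erase (0 : F), χ s * ψ (E * s) = ∑ s : F, χ s * ψ (E * s) := by
      rw [← Finset.add_sum_erase _ _ (Finset.mem_univ (0 : F)), hχ0, zero_mul, zero_add]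
    rw [h3, key E]
  -- the discriminant
  set D : F := b ^ 2 - 4 * a * c with hDdef
  have hEDeq : E = -D / 4 := by
    rw [hEdef, hDdef]
    field_simp
    ring
  have hED : E = 0 ↔ D = 0 := by
    rw [hEDeq, div_eq_zero_iff, neg_eq_zero]
    simp [h4F]
  have hχE : χ (-E) = χ D := by
    have h1 : -E = D * (2⁻¹ : F) ^ 2 := by
      rw [hEDeq, inv_pow, show ((2:F) ^ 2) = 4 by norm_num, neg_div, neg_neg, div_eq_mul_inv]
    rw [h1, map_mul]
    have h2 : χ ((2⁻¹ : F) ^ 2) = 1 := by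
      rw [hχdef, MulChar.ringHomComp_apply, quadraticChar_sq_one' (inv_ne_zero h2F)]
      norm_num
    rw [h2, mul_one]
  have hTval : T = (if a = 0 ∧ b = 0 ∧ c = 0 then (Fintype.card F : ℂ) ^ 2 else 0)
      + (Fintype.card F : ℂ) * χ D := by
    apply mul_left_cancel₀ hq0
    have h1 : ∑ s : F, I s = I 0 + ∑ s ∈ Finset.univ.erase (0 : F), I s :=
      (Finset.add_sum_erase _ _ (Finset.mem_univ (0 : F))).symm
    rw [hqT, h1, hsum2, hI0]
    have h2 : χ E * (g * g) = (Fintype.card F : ℂ) * χ D := by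
      have h3 : g * g = χ (-1) * (Fintype.card F : ℂ) := by rw [← sq]; exact hg2
      have h4 : χ (-1) * χ E = χ (-E) := by rw [← map_mul, neg_one_mul]
      calc χ E * (g * g) = (χ (-1) * χ E) * (Fintype.card F : ℂ) := by rw [h3]; ring
        _ = (Fintype.card F : ℂ) * χ D := by rw [h4, hχE]; ring
    calc (if a = 0 ∧ b = 0 ∧ c = 0 then (Fintype.card F : ℂ) ^ 3 else 0)
          + (Fintype.card F : ℂ) * g * (χ E * g)
        = (if a = 0 ∧ b = 0 ∧ c = 0 then (Fintype.card F : ℂ) ^ 3 else 0)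
          + (Fintype.card F : ℂ) * (χ E * (g * g)) := by ring
      _ = _ := by
          rw [h2]
          split_ifs <;> ring
  -- main pointwise identity and assembly
  have hpoint : ∀ x y z : F,
      2 * (if IsSquare (y ^ 2 - x * z) ∧ y ^ 2 - x * z ≠ 0
            then ψ (-(a * x) - b * y - c * z) else 0)
      = (ψ (-(a * x) - b * y - c * z)
          - (if y ^ 2 - x * z = 0 then ψ (-(a * x) - b * y - c * z) else 0))
        + χ (y ^ 2 - x * z) * ψ (-(a * x) - b * y - c * z) := by
    intro x y z
    set d : F := y ^ 2 - x * z with hd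
    set w : ℂ := ψ (-(a * x) - b * y - c * z) with hw
    by_cases hd0 : d = 0
    · rw [if_neg (fun h => h.2 hd0), if_pos hd0, hd0, hχ0]
      ring
    · by_cases hsq : IsSquare d
      · have h1 : χ d = 1 := by
          rw [hχdef, MulChar.ringHomComp_apply,
            (quadraticChar_one_iff_isSquare hd0).mpr hsq]
          norm_num
        rw [h1, if_pos ⟨hsq, hd0⟩, if_neg hd0]
        ring
      · have h1 : χ d = -1 := by
          rw [hχdef, MulChar.ringHomComp_apply,
            quadraticChar_neg_one_iff_not_isSquare.mpr hsq]
          norm_num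
        rw [h1, if_neg (fun h => hsq h.1), if_neg hd0]
        ring
  have hA : ∑ x : F, ∑ y : F, ∑ z : F, ψ (-(a * x) - b * y - c * z) = I 0 := by
    rw [hIdef]
    refine Finset.sum_congr rfl fun x _ => Finset.sum_congr rfl fun y _ =>
      Finset.sum_congr rfl fun z _ => ?_
    congr 1
    ring
  have hmain : 2 * (∑ x : F, ∑ y : F, ∑ z : F,
      if IsSquare (y ^ 2 - x * z) ∧ y ^ 2 - x * z ≠ 0
      then ψ (-(a * x) - b * y - c * z) else 0) = (I 0 - T) + S1 := by
    rw [← hA, hTdef, hS1def]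
    simp only [Finset.mul_sum]
    rw [Finset.sum_congr rfl fun x _ => Finset.sum_congr rfl fun y _ =>
      Finset.sum_congr rfl fun z _ => hpoint x y z]
    simp only [Finset.sum_add_distrib, Finset.sum_sub_distrib]
  -- final computation
  have h2c : (2 : ℂ) ≠ 0 := two_ne_zero
  have htwo : ∀ X : ℂ, 2 * (X / 2) = X := fun X => by
    rw [mul_comm, div_mul_cancel₀ _ h2c]
  apply mul_left_cancel₀ h2c
  rw [hmain, hI0, hTval, hS1val]
  by_cases h1 : a = 0 ∧ b = 0 ∧ c = 0
  · have hD0 : D = 0 := by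
      rw [hDdef, h1.1, h1.2.1]
      ring
    have hE0 : E = 0 := hED.mpr hD0
    simp only [if_pos h1, hD0, hχ0, mul_zero, add_zero, if_pos hE0]
    rw [htwo]
    ring
  · by_cases h2 : D = 0
    · have hac : (a, c) ≠ ((0 : F), (0 : F)) := by
        intro h
        have ha : a = 0 := congrArg Prod.fst h
        have hc : c = 0 := congrArg Prod.snd h
        have hb : b = 0 := by
          have hb2 : b ^ 2 = 0 := by
            have h5 := h2
            rw [hDdef, ha, hc] at h5
            linear_combination h5
          exact pow_eq_zero_iff (by norm_num) |>.mp hb2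
        exact h1 ⟨ha, hb, hc⟩
      have hE0 : E = 0 := hED.mpr h2
      rw [if_neg h1, if_neg h1, if_neg h1, if_pos (And.intro h2 hac), h2, hχ0,
        if_pos hE0, htwo]
      ring
    · have hE0 : E ≠ 0 := fun h => h2 (hED.mp h)
      have hDc : ¬(D = 0 ∧ (a, c) ≠ ((0 : F), (0 : F))) := fun h => h2 h.1
      by_cases h3 : IsSquare D
      · have hχD : χ D = 1 := by
          rw [hχdef, MulChar.ringHomComp_apply,
            (quadraticChar_one_iff_isSquare h2).mpr h3]
          norm_num
        simp only [if_neg h1, if_neg hDc, if_pos h3, hχD, if_neg hE0]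
        ring
      · have hχD : χ D = -1 := by
          rw [hχdef, MulChar.ringHomComp_apply,
            quadraticChar_neg_one_iff_not_isSquare.mpr h3]
          norm_num
        simp only [if_neg h1, if_neg hDc, if_neg h3, hχD, if_neg hE0]
        ring
end

section
/- Let q be even, ψ a nontrivial additive character of F_q, and ε : F_q → {±1} the character whose kernel is the image of x ↦ x² + x. For a, b, c ∈ F_q, the sum of ψ(-ax - by - cz) over all nonzero triples (x,y,z) ∈ F_q³ with y² = xz equals: q² - 1 if a = b = c = 0; -1 if b = 0 and (a,c) ≠ (0,0); q - 1 if b ≠ 0 and ε(ac b⁻²) = 1; and -q - 1 if b ≠ 0 and ε(ac b⁻²) = -1. -/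
/-! In characteristic 2 the signs in `ψ` disappear, and the punctured cone `y² = xz` consists of the
points `(0, 0, z)` with `z ≠ 0` and `(x, y, y² / x)` with `x ≠ 0`. For `b, c ≠ 0` the substitution
`y = (b x / c) u` turns the phase `a x + b y + c y² / x` into `x (a + (b² / c) (u² + u))`; summing
over `x ≠ 0` first, orthogonality of `ψ` counts the `u` with `u² + u = a c / b²`. As `u ↦ u² + u` is
two-to-one onto `ker ε`, there are `1 + ε (a c / b²)` of them. -/

open Finset
open scoped Classical

section

variable {F : Type*} [Field F] [Fintype F]

theorem charP_two_of_even_card (hq : Even (Fintype.card F)) : CharP F 2 :=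
  ringChar.of_eq (FiniteField.even_card_iff_char_two.mpr (Nat.even_iff.mp hq))

theorem sum_punctured_cone {M : Type*} [AddCommMonoid M] (f : F → F → F → M) :
    (∑ x : F, ∑ y : F, ∑ z : F,
        if y ^ 2 = x * z ∧ (x, y, z) ≠ ((0 : F), (0 : F), (0 : F)) then f x y z else 0) =
      ∑ z ∈ ({0}ᶜ : Finset F), f 0 0 z + ∑ x ∈ ({0}ᶜ : Finset F), ∑ y : F, f x y (y ^ 2 / x) := by
  rw [Fintype.sum_eq_add_sum_compl 0]
  congr 1
  · rw [Fintype.sum_eq_single 0 fun y hy => sum_eq_zero fun z _ => if_neg (by simp [hy]),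
      ← sum_filter]
    congr 1
    ext z
    simp
  · refine sum_congr rfl fun x hx => sum_congr rfl fun y _ => ?_
    have hx : x ≠ 0 := by simpa using hx
    rw [Fintype.sum_eq_single (y ^ 2 / x) fun z hz => if_neg ?_]
    · rw [if_pos ⟨by field_simp, by simp [hx]⟩]
    · rintro ⟨h, -⟩
      exact hz (by rw [h]; field_simp)

theorem card_filter_sq_add_self_eq [CharP F 2] (v : F) :
    #{u | u ^ 2 + u = v} = if ∃ t, t ^ 2 + t = v then 2 else 0 := by
  split_ifs with h
  · obtain ⟨t, rfl⟩ := h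
    have hfiber : ({u | u ^ 2 + u = t ^ 2 + t} : Finset F) = {t, t + 1} := by
      ext u
      have h2 : (2 : F) = 0 := CharTwo.two_eq_zero
      simp only [mem_filter, mem_univ, true_and, mem_insert, mem_singleton]
      constructor
      · intro hu
        have : (u + t) * (u + t + 1) = 0 := by linear_combination hu + (u * t + t ^ 2 + t) * h2
        rcases mul_eq_zero.mp this with h | h
        · left; linear_combination h - t * h2
        · right; linear_combination h - (t + 1) * h2
      · rintro (rfl | rfl)
        · rfl
        · linear_combination (t + 1) * h2
    rw [hfiber, card_pair (by simp)]
  · simpa [filter_eq_empty_iff] using h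

section AddChar

variable (ψ : AddChar F ℂ)

theorem sum_addChar_mul (hψ : ψ ≠ 1) (t : F) :
    ∑ x, ψ (x * t) = if t = 0 then (Fintype.card F : ℂ) else 0 :=
  mod_cast AddChar.sum_mulShift t (.of_ne_one hψ)

theorem sum_compl_zero_addChar_mul (hψ : ψ ≠ 1) (t : F) :
    ∑ x ∈ ({0}ᶜ : Finset F), ψ (x * t) = (if t = 0 then (Fintype.card F : ℂ) else 0) - 1 := by
  rw [← sum_addChar_mul ψ hψ t, Fintype.sum_eq_add_sum_compl 0, zero_mul,
    AddChar.map_zero_eq_one, add_sub_cancel_left]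

theorem sum_addChar_sq_mul [CharP F 2] (hψ : ψ ≠ 1) (d : F) :
    ∑ y, ψ (y ^ 2 * d) = if d = 0 then (Fintype.card F : ℂ) else 0 := by
  rw [← sum_addChar_mul ψ hψ d]
  exact (bijective_frobenius F 2).sum_comp fun u => ψ (u * d)

theorem sum_addChar_mul_add_sq_mul {b d : F} (hb : b ≠ 0) (hd : d ≠ 0) :
    ∑ y, ψ (y * b + y ^ 2 * d) = ∑ u, ψ ((u ^ 2 + u) * (b ^ 2 / d)) := by
  rw [← (mulRight_bijective₀ (b / d) (div_ne_zero hb hd)).sum_comp]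
  refine sum_congr rfl fun u _ => congrArg ψ ?_
  field_simp
  ring

theorem sum_punctured_cone_addChar [CharP F 2] (hψ : ψ ≠ 1) (a b c : F) :
    (∑ x : F, ∑ y : F, ∑ z : F,
        if y ^ 2 = x * z ∧ (x, y, z) ≠ ((0 : F), (0 : F), (0 : F))
        then ψ (-(a * x) - b * y - c * z) else 0) =
      (if c = 0 then (Fintype.card F : ℂ) else 0) - 1 +
        ∑ x ∈ ({0}ᶜ : Finset F), ψ (x * a) * ∑ y, ψ (y * b + y ^ 2 * (c / x)) := by
  simp only [sum_punctured_cone, CharTwo.sub_eq_add, CharTwo.neg_eq, mul_zero, zero_add,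
    mul_sum, ← AddChar.map_add_eq_mul]
  rw [← sum_compl_zero_addChar_mul ψ hψ c]
  congr 1
  · simp_rw [mul_comm c]
  · refine sum_congr rfl fun x _ => sum_congr rfl fun y _ => congrArg ψ ?_
    ring

theorem sum_compl_zero_mul_sum_quadratic [CharP F 2] (hψ : ψ ≠ 1) {a b c : F} (hb : b ≠ 0)
    (hc : c ≠ 0) :
    ∑ x ∈ ({0}ᶜ : Finset F), ψ (x * a) * ∑ y, ψ (y * b + y ^ 2 * (c / x)) =
      Fintype.card F * ((#{u | u ^ 2 + u = a * c / b ^ 2} : ℂ) - 1) := by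
  calc ∑ x ∈ ({0}ᶜ : Finset F), ψ (x * a) * ∑ y, ψ (y * b + y ^ 2 * (c / x))
      = ∑ u, ∑ x ∈ ({0}ᶜ : Finset F), ψ (x * (a + (u ^ 2 + u) * (b ^ 2 / c))) := by
        rw [sum_comm]
        refine sum_congr rfl fun x hx => ?_
        have hx : x ≠ 0 := by simpa using hx
        rw [sum_addChar_mul_add_sq_mul ψ hb (div_ne_zero hc hx), mul_sum]
        refine sum_congr rfl fun u _ => ?_
        rw [← AddChar.map_add_eq_mul]
        congr 1
        field_simp
    _ = ∑ u, ((if u ^ 2 + u = a * c / b ^ 2 then (Fintype.card F : ℂ) else 0) - 1) := by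
        refine sum_congr rfl fun u _ => ?_
        rw [sum_compl_zero_addChar_mul ψ hψ]
        congr 2
        rw [add_eq_zero_iff_eq_neg, CharTwo.neg_eq, eq_div_iff (pow_ne_zero 2 hb)]
        field_simp
        exact propext eq_comm
    _ = Fintype.card F * ((#{u | u ^ 2 + u = a * c / b ^ 2} : ℂ) - 1) := by
        rw [sum_sub_distrib, ← sum_filter, sum_const, sum_const, card_univ]
        simp only [nsmul_eq_mul]
        ring

end AddChar

end

theorem stmt4_general {F : Type*} [Field F] [Fintype F] (hq : Even (Fintype.card F))
    (ψ : AddChar F ℂ) (hψ : ψ ≠ 1)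
    (ε : F → ℤ)
    (hεker : ∀ x : F, ε x = 1 ↔ ∃ t : F, t ^ 2 + t = x)
    (hεval : ∀ x : F, ε x = 1 ∨ ε x = -1)
    (a b c : F) :
    (∑ x : F, ∑ y : F, ∑ z : F,
        if y ^ 2 = x * z ∧ (x, y, z) ≠ ((0 : F), (0 : F), (0 : F))
        then ψ (-(a * x) - b * y - c * z) else 0) =
      if a = 0 ∧ b = 0 ∧ c = 0 then (Fintype.card F : ℂ) ^ 2 - 1
      else if b = 0 ∧ (a, c) ≠ ((0 : F), (0 : F)) then -1
      else if ε (a * c / b ^ 2) = 1 then (Fintype.card F : ℂ) - 1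
      else -(Fintype.card F : ℂ) - 1 := by
  have := charP_two_of_even_card hq
  rw [sum_punctured_cone_addChar ψ hψ]
  rcases eq_or_ne b 0 with rfl | hb <;> rcases eq_or_ne c 0 with rfl | hc
  · simp only [zero_div, mul_zero, add_zero, ← sum_mul, sum_compl_zero_addChar_mul ψ hψ]
    by_cases ha : a = 0 <;> simp [ha] <;> ring
  · rw [sum_eq_zero fun x hx => ?_]
    · simp [hc]
    · have hx : x ≠ 0 := by simpa using hx
      simp [sum_addChar_sq_mul ψ hψ, hc, hx]
  · have hε : ε 0 = 1 := (hεker 0).mpr ⟨0, by ring⟩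
    simp [sum_addChar_mul ψ hψ, hb, hε]
  · rw [sum_compl_zero_mul_sum_quadratic ψ hψ hb hc, card_filter_sq_add_self_eq]
    simp_rw [← hεker]
    rcases hεval (a * c / b ^ 2) with h | h <;> simp [h, hb, hc] <;> ring

theorem stmt4 {F : Type*} [Field F] [Fintype F] (hq : Even (Fintype.card F))
    (ψ : AddChar F ℂ) (hψ : ψ ≠ 1)
    (ε : F → ℤ) (hεhom : ∀ x y : F, ε (x + y) = ε x * ε y)
    (hεker : ∀ x : F, ε x = 1 ↔ ∃ t : F, t ^ 2 + t = x)
    (hεval : ∀ x : F, ε x = 1 ∨ ε x = -1)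
    (a b c : F) :
    (∑ x : F, ∑ y : F, ∑ z : F,
        if y ^ 2 = x * z ∧ (x, y, z) ≠ ((0 : F), (0 : F), (0 : F))
        then ψ (-(a * x) - b * y - c * z) else 0) =
      if a = 0 ∧ b = 0 ∧ c = 0 then (Fintype.card F : ℂ) ^ 2 - 1
      else if b = 0 ∧ (a, c) ≠ ((0 : F), (0 : F)) then -1
      else if ε (a * c / b ^ 2) = 1 then (Fintype.card F : ℂ) - 1
      else -(Fintype.card F : ℂ) - 1 :=
  stmt4_general hq ψ hψ ε hεker hεval a b c
end

section
/- Let q be even, ψ a nontrivial additive character of F_q, and ε : F_q → {±1} the character with kernel the image of x ↦ x² + x. For a, b, c ∈ F_q, the sum of ψ(-ax - by - cz) over triples (x,y,z) ∈ F_q³ with y² ≠ xz and (x,z) ≠ (0,0) equals: (q-1)(q²-1) if a = b = c = 0; -q + 1 if b = 0 and (a,c) ≠ (0,0); -q + 1 if b ≠ 0 and ε(ac b⁻²) = 1; and q + 1 if b ≠ 0 and ε(ac b⁻²) = -1. -/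
open scoped Classical
open Finset AddChar

/-!
In characteristic 2 squaring is a bijection of `F`, so the cone `y² = xz` is parametrized by
`(u², uv, v²)`. Inclusion–exclusion (removing the cone and the line `x = z = 0`) reduces the sum to
complete linear character sums, which vanish unless the coefficient does, and to
`T = ∑ u v, ψ (a u² + b u v + c v²)`. Substituting `v = u w` for `u ≠ 0` and summing `ψ (u² r)`
over `u ≠ 0` gives `T = q [c = 0] + q N - q`, where `N` counts the roots of `c w² + b w + a`.
For `b, c ≠ 0` the substitution `w = (b / c) t` turns these roots into the solutions of
`t² + t = a c / b²`, of which there are `1 + ε (a c / b²)`.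
-/

theorem ite_not_and_not_eq {M : Type*} [AddCommGroup M] (p q : Prop) [Decidable p] [Decidable q]
    (m : M) : (if ¬p ∧ ¬q then m else 0) =
      m - (if p then m else 0) - (if q then m else 0) + (if p ∧ q then m else 0) := by
  split_ifs <;> simp_all

section CharacterSums

variable {F R : Type*} [Field F] [Fintype F] [CommRing R] [IsDomain R] {ψ : AddChar F R}

theorem sum_addChar_mul_left (hψ : ψ ≠ 1) (d : F) :
    ∑ x, ψ (d * x) = if d = 0 then (Fintype.card F : R) else 0 := by
  simp_rw [mul_comm d]
  exact_mod_cast sum_mulShift d (IsPrimitive.of_ne_one hψ)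

theorem sum_sum_sum_addChar_linear (hψ : ψ ≠ 1) (a b c : F) :
    ∑ x, ∑ y, ∑ z, ψ (a * x + b * y + c * z) =
      (if a = 0 then (Fintype.card F : R) else 0) * (if b = 0 then (Fintype.card F : R) else 0) *
        (if c = 0 then (Fintype.card F : R) else 0) := by
  simp_rw [map_add_eq_mul, ← mul_sum, ← sum_mul, ← sum_mul_sum, sum_addChar_mul_left hψ]

theorem sum_sum_sum_addChar_linear_yAxis (hψ : ψ ≠ 1) (a b c : F) :
    ∑ x, ∑ y, ∑ z, (if x = 0 ∧ z = 0 then ψ (a * x + b * y + c * z) else 0) =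
      if b = 0 then (Fintype.card F : R) else 0 := by
  simp [ite_and, sum_addChar_mul_left hψ]

end CharacterSums

section CharTwo

variable {F R : Type*} [Field F] [Fintype F] [CharP F 2] [CommRing R] {ψ : AddChar F R}

theorem sum_addChar_mul_sq_s6 [IsDomain R] (hψ : ψ ≠ 1) (r : F) :
    ∑ v, ψ (r * v ^ 2) = if r = 0 then (Fintype.card F : R) else 0 := by
  rw [← sum_addChar_mul_left hψ]
  exact Fintype.sum_bijective _ (PerfectRing.bijective_frobenius (R := F) (p := 2)) _ _
    fun _ ↦ rfl

theorem sum_sum_sum_addChar_cone (a b c : F) :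
    ∑ x, ∑ y, ∑ z, (if y ^ 2 = x * z then ψ (a * x + b * y + c * z) else 0) =
      ∑ u, ∑ v, ψ (a * u ^ 2 + b * u * v + c * v ^ 2) := by
  have hsq := PerfectRing.bijective_frobenius (R := F) (p := 2)
  rw [← Fintype.sum_bijective _ hsq _ _ fun _ ↦ rfl]
  refine sum_congr rfl fun u _ ↦ ?_
  simp_rw [← Fintype.sum_bijective _ hsq _ (fun z ↦ ite _ (ψ (_ + c * z)) 0) fun _ ↦ rfl]
  rw [sum_comm]
  refine sum_congr rfl fun v _ ↦ ?_
  have hroot (y : F) : y ^ 2 = u ^ 2 * v ^ 2 ↔ y = u * v := by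
    rw [← mul_pow]; exact hsq.1.eq_iff
  simp_rw [hroot, sum_ite_eq', mem_univ, if_true]
  ring_nf

theorem card_filter_sq_add_self_eq_s6 (s : F) : #{w | w ^ 2 + w = s ^ 2 + s} = 2 := by
  have h2 : (2 : F) = 0 := CharTwo.two_eq_zero
  have hfactor (w : F) : w ^ 2 + w = s ^ 2 + s ↔ w = s ∨ w = s + 1 := by
    rw [← sub_eq_zero, ← sub_eq_zero (a := w), ← sub_eq_zero (a := w) (b := s + 1), ← mul_eq_zero]
    constructor <;> intro h
    · linear_combination h + (-w - w * s + s ^ 2 + s) * h2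
    · linear_combination h - (-w - w * s + s ^ 2 + s) * h2
  rw [show ({w | w ^ 2 + w = s ^ 2 + s} : Finset F) = {s, s + 1} by ext; simp [hfactor]]
  exact card_pair (by simp)

theorem card_filter_sq_add_self_eq_one_add {ε : F → ℤ}
    (hεker : ∀ x : F, ε x = 1 ↔ ∃ t : F, t ^ 2 + t = x) (hεval : ∀ x : F, ε x = 1 ∨ ε x = -1)
    (x : F) : (#{t | t ^ 2 + t = x} : ℤ) = 1 + ε x := by
  rcases hεval x with h | h
  · obtain ⟨s, rfl⟩ := (hεker _).mp h
    rw [card_filter_sq_add_self_eq_s6, h]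
    rfl
  · have hempty : ({t | t ^ 2 + t = x} : Finset F) = ∅ :=
      filter_false_of_mem fun t _ ht ↦ by simp [(hεker x).mpr ⟨t, ht⟩] at h
    rw [hempty, h]
    rfl

theorem sum_sum_addChar_binaryForm [IsDomain R] (hψ : ψ ≠ 1) (a b c : F) :
    ∑ u, ∑ v, ψ (a * u ^ 2 + b * u * v + c * v ^ 2) =
      (if c = 0 then (Fintype.card F : R) else 0) +
        Fintype.card F * #{w | c * w ^ 2 + b * w + a = 0} - Fintype.card F := by
  have hline (u : F) (hu : u ≠ 0) : ∑ v, ψ (a * u ^ 2 + b * u * v + c * v ^ 2) =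
      ∑ w, ψ ((c * w ^ 2 + b * w + a) * u ^ 2) :=
    (Fintype.sum_bijective _ (mulLeft_bijective₀ u hu) _ _ fun w ↦ by ring_nf).symm
  rw [← add_sum_erase univ _ (mem_univ 0), sum_congr rfl fun u hu ↦ hline u (ne_of_mem_erase hu),
    sum_comm]
  simp_rw [sum_erase_eq_sub (mem_univ _), sum_addChar_mul_sq_s6 hψ, zero_pow two_ne_zero, mul_zero,
    zero_add, map_zero_eq_one, sum_sub_distrib, ← sum_filter, sum_const, card_univ, nsmul_eq_mul,
    mul_one, zero_mul, zero_add]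
  rw [sum_addChar_mul_sq_s6 hψ]
  ring

theorem sum_sum_addChar_diagonalForm [IsDomain R] (hψ : ψ ≠ 1) (a c : F) :
    ∑ u, ∑ v, ψ (a * u ^ 2 + 0 * u * v + c * v ^ 2) =
      (if a = 0 then (Fintype.card F : R) else 0) *
        (if c = 0 then (Fintype.card F : R) else 0) := by
  simp_rw [zero_mul, add_zero, map_add_eq_mul, ← sum_mul_sum, sum_addChar_mul_sq_s6 hψ]

theorem card_filter_quadratic_eq_card_filter_sq_add_self {b c : F} (hb : b ≠ 0) (hc : c ≠ 0)
    (a : F) :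
    #{w | c * w ^ 2 + b * w + a = 0} = #{t | t ^ 2 + t = a * c / b ^ 2} := by
  refine (card_equiv (Equiv.mulLeft₀ (b / c) (div_ne_zero hb hc)) fun t ↦ ?_).symm
  have h2 : (2 : F) = 0 := CharTwo.two_eq_zero
  -- the summand `a * 2 = 0` absorbs the sign of `-(a * c / b ^ 2)`
  have hsubst : c * (b / c * t) ^ 2 + b * (b / c * t) + a =
      b ^ 2 / c * (t ^ 2 + t - a * c / b ^ 2) + a * 2 := by
    field_simp
    ring
  simp only [mem_filter_univ, Equiv.mulLeft₀_apply, hsubst, h2, mul_zero, add_zero, mul_eq_zero,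
    sub_eq_zero, div_ne_zero (pow_ne_zero 2 hb) hc, false_or]

theorem sum_sum_addChar_binaryForm_of_ne_zero [IsDomain R] (hψ : ψ ≠ 1) {b : F} (hb : b ≠ 0)
    (a c : F) :
    ∑ u, ∑ v, ψ (a * u ^ 2 + b * u * v + c * v ^ 2) =
      Fintype.card F * ((#{t | t ^ 2 + t = a * c / b ^ 2} : R) - 1) := by
  rw [sum_sum_addChar_binaryForm hψ]
  rcases eq_or_ne c 0 with rfl | hc
  · have hlinear : #{w | 0 * w ^ 2 + b * w + a = 0} = 1 :=
      card_eq_one.mpr ⟨-a / b, by ext w; simp [eq_div_iff hb, add_eq_zero_iff_eq_neg, mul_comm]⟩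
    have hzero : a * 0 / b ^ 2 = 0 ^ 2 + 0 := by simp
    rw [hlinear, hzero, card_filter_sq_add_self_eq_s6]
    simp only [if_true, Nat.cast_one, Nat.cast_ofNat]
    ring
  · rw [card_filter_quadratic_eq_card_filter_sq_add_self hb hc, if_neg hc]
    ring

end CharTwo

theorem stmt6_general {F : Type*} [Field F] [Fintype F] (hq : Even (Fintype.card F))
    (ψ : AddChar F ℂ) (hψ : ψ ≠ 1)
    (ε : F → ℤ)
    (hεker : ∀ x : F, ε x = 1 ↔ ∃ t : F, t ^ 2 + t = x)
    (hεval : ∀ x : F, ε x = 1 ∨ ε x = -1)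
    (a b c : F) :
    (∑ x : F, ∑ y : F, ∑ z : F,
        if y ^ 2 ≠ x * z ∧ (x, z) ≠ ((0 : F), (0 : F))
        then ψ (-(a * x) - b * y - c * z) else 0) =
      if a = 0 ∧ b = 0 ∧ c = 0 then
        ((Fintype.card F : ℂ) - 1) * ((Fintype.card F : ℂ) ^ 2 - 1)
      else if b = 0 ∧ (a, c) ≠ ((0 : F), (0 : F)) then -(Fintype.card F : ℂ) + 1
      else if ε (a * c / b ^ 2) = 1 then -(Fintype.card F : ℂ) + 1
      else (Fintype.card F : ℂ) + 1 := by
  have : CharP F 2 := ringChar.of_eq (FiniteField.even_card_iff_char_two.mpr (Nat.even_iff.mp hq))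
  have hvertex : ∑ x : F, ∑ y : F, ∑ z : F,
      (if y ^ 2 = x * z ∧ x = 0 ∧ z = 0 then ψ (a * x + b * y + c * z) else 0) = 1 := by
    have hiff (x y z : F) : (y ^ 2 = x * z ∧ x = 0 ∧ z = 0) ↔ (x = 0 ∧ y = 0 ∧ z = 0) := by
      aesop
    simp [hiff, ite_and]
  simp_rw [CharTwo.neg_eq, CharTwo.sub_eq_add, Ne, Prod.mk.injEq, ite_not_and_not_eq,
    sum_add_distrib, sum_sub_distrib, sum_sum_sum_addChar_linear hψ, sum_sum_sum_addChar_cone,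
    sum_sum_sum_addChar_linear_yAxis hψ, hvertex]
  rcases eq_or_ne b 0 with rfl | hb
  · rw [sum_sum_addChar_diagonalForm hψ]
    by_cases ha : a = 0 <;> by_cases hc : c = 0 <;> simp [ha, hc]
    ring
  · rw [sum_sum_addChar_binaryForm_of_ne_zero hψ hb]
    have hcard : (#{t | t ^ 2 + t = a * c / b ^ 2} : ℂ) = 1 + ε (a * c / b ^ 2) := by
      exact_mod_cast card_filter_sq_add_self_eq_one_add hεker hεval _
    rw [hcard]
    rcases hεval (a * c / b ^ 2) with h | h <;> simp [hb, h]

theorem stmt6 {F : Type*} [Field F] [Fintype F] (hq : Even (Fintype.card F))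
    (ψ : AddChar F ℂ) (hψ : ψ ≠ 1)
    (ε : F → ℤ) (hεhom : ∀ x y : F, ε (x + y) = ε x * ε y)
    (hεker : ∀ x : F, ε x = 1 ↔ ∃ t : F, t ^ 2 + t = x)
    (hεval : ∀ x : F, ε x = 1 ∨ ε x = -1)
    (a b c : F) :
    (∑ x : F, ∑ y : F, ∑ z : F,
        if y ^ 2 ≠ x * z ∧ (x, z) ≠ ((0 : F), (0 : F))
        then ψ (-(a * x) - b * y - c * z) else 0) =
      if a = 0 ∧ b = 0 ∧ c = 0 then
        ((Fintype.card F : ℂ) - 1) * ((Fintype.card F : ℂ) ^ 2 - 1)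
      else if b = 0 ∧ (a, c) ≠ ((0 : F), (0 : F)) then -(Fintype.card F : ℂ) + 1
      else if ε (a * c / b ^ 2) = 1 then -(Fintype.card F : ℂ) + 1
      else (Fintype.card F : ℂ) + 1 :=
  stmt6_general hq ψ hψ ε hεker hεval a b c
end

section
/- Let q be odd and consider the matrix group T(a,b,c) of all 4×4 matrices of the form [[r - bs, -as, 0, 0], [cs, r, 0, 0], [0, 0, r - bs, as], [0, 0, -cs, r]] with r, s ∈ F_q and r² - brs + acs² ∈ F_q×. If b² - 4ac is a nonzero square in F_q, then T(a,b,c) is isomorphic as a group to F_q× × F_q×; if b² - 4ac is a nonsquare, then T(a,b,c) is isomorphic to F_{q²}×. -/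
/-!
Let `M` be the matrix of the family with `r = 0`, `s = 1`. The displayed matrices are
`r • 1 + s • M`, and `M² + b M + a c = 0`, so they form the image of the `F`-algebra map
`F[X]/(X² + bX + ac) → Mat₄(F)` sending `X` to `M`. This map is injective because `1` and `M` are
linearly independent (`M` is nonzero, the discriminant being nonzero, with vanishing `(2,2)`
entry), and the determinant of `r • 1 + s • M` is the square of the norm `r² - brs + acs²`.
Hence `T(a,b,c)` is the unit group of `F[X]/(X² + bX + ac)`. If the discriminant is a nonzero
square, the polynomial has two distinct roots and the Chinese remainder theorem gives `F × F`;
otherwise it is irreducible and the quotient is a field with `q²` elements.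
-/

open Polynomial

section MonicQuadratic

variable {R : Type*} [CommRing R]

noncomputable def monicQuadratic (b e : R) : R[X] := X ^ 2 + C b * X + C e

theorem monicQuadratic_monic [Nontrivial R] (b e : R) : (monicQuadratic b e).Monic := by
  unfold monicQuadratic; monicity!

theorem natDegree_monicQuadratic [Nontrivial R] (b e : R) :
    (monicQuadratic b e).natDegree = 2 := by
  unfold monicQuadratic; compute_degree!

namespace AdjoinRoot

-- The conjugate of `r + sθ` is `(r - bs) - sθ`, as the other root of `X² + bX + e` is `-b - θ`.
theorem add_mul_root_mul_conj (b e r s : R) :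
    (of (monicQuadratic b e) r + of _ s * root _) * (of _ (r - b * s) - of _ s * root _) =
      of (monicQuadratic b e) (r ^ 2 - b * r * s + e * s ^ 2) := by
  have hroot : root (monicQuadratic b e) ^ 2 + of _ b * root _ + of _ e = 0 := by
    have h : mk (monicQuadratic b e) (X ^ 2 + C b * X + C e) = 0 := mk_self
    simpa using h
  simp only [map_add, map_sub, map_mul, map_pow]
  linear_combination (-(of (monicQuadratic b e) s) ^ 2) * hroot

theorem isUnit_add_mul_root {b e r s : R} (h : IsUnit (r ^ 2 - b * r * s + e * s ^ 2)) :
    IsUnit (of (monicQuadratic b e) r + of _ s * root _) :=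
  isUnit_of_mul_isUnit_left ((add_mul_root_mul_conj b e r s).symm ▸ h.map _)

theorem exists_eq_add_mul_root [Nontrivial R] {b e : R} (z : AdjoinRoot (monicQuadratic b e)) :
    ∃ r s : R, z = of _ r + of _ s * root _ := by
  have hmonic := monicQuadratic_monic b e
  obtain ⟨g, rfl⟩ := mk_surjective z
  have hdeg : (g %ₘ monicQuadratic b e).natDegree ≤ 1 := by
    have hne : monicQuadratic b e ≠ 1 := fun h => by
      simpa [h] using natDegree_monicQuadratic b e
    have := natDegree_modByMonic_lt g hmonic hne
    rw [natDegree_monicQuadratic] at this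
    omega
  refine ⟨(g %ₘ monicQuadratic b e).coeff 0, (g %ₘ monicQuadratic b e).coeff 1, ?_⟩
  conv_lhs => rw [← mk_leftInverse hmonic (mk _ g), modByMonicHom_mk,
    eq_X_add_C_of_natDegree_le_one hdeg]
  simp only [map_add, map_mul, mk_C, mk_X]
  ring

variable {A : Type*} [Semiring A] [Algebra R A]

-- Unlike `AdjoinRoot.liftAlgHom`, the target need not be commutative (we need matrices).
noncomputable def liftOfAeval (p : R[X]) (x : A) (hx : aeval x p = 0) : AdjoinRoot p →ₐ[R] A :=
  Ideal.Quotient.liftₐ _ (aeval x) fun g hg => by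
    obtain ⟨k, rfl⟩ := Ideal.mem_span_singleton.mp hg
    rw [map_mul, hx, zero_mul]

@[simp]
theorem liftOfAeval_of (p : R[X]) (x : A) (hx : aeval x p = 0) (r : R) :
    liftOfAeval p x hx (of p r) = algebraMap R A r := by
  rw [← algebraMap_eq, AlgHom.commutes]

@[simp]
theorem liftOfAeval_root (p : R[X]) (x : A) (hx : aeval x p = 0) :
    liftOfAeval p x hx (root p) = x := by
  rw [← mk_X]
  exact aeval_X x

end AdjoinRoot

end MonicQuadratic

section Field

variable {F : Type*} [Field F]

theorem irreducible_monicQuadratic {b e : F} (h : ¬ IsSquare (b ^ 2 - 4 * e)) :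
    Irreducible (monicQuadratic b e) := by
  refine irreducible_of_degree_le_three_of_not_isRoot (by simp [natDegree_monicQuadratic])
    fun x hx => h ⟨2 * x + b, ?_⟩
  have hx : x * x + b * x + e = 0 := by simpa [monicQuadratic, sq] using hx
  linear_combination -4 * hx

theorem monicQuadratic_eq_mul_X_sub_C [NeZero (2 : F)] {b e d : F} (h : b ^ 2 - 4 * e = d * d) :
    monicQuadratic b e = (X - C ((-b + d) / 2)) * (X - C ((-b - d) / 2)) := by
  have hsum : C ((-b + d) / 2) + C ((-b - d) / 2) = -C b := by
    rw [← C_add, ← C_neg]; congr 1; field_simp; ring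
  have hprod : C ((-b + d) / 2) * C ((-b - d) / 2) = C e := by
    rw [← C_mul]; congr 1; field_simp; linear_combination h
  rw [monicQuadratic]
  linear_combination X * hsum - hprod

noncomputable def adjoinRootMulXSubCEquivProd {α β : F} (h : α ≠ β) :
    AdjoinRoot ((X - C α) * (X - C β)) ≃+* F × F :=
  (Ideal.quotEquivOfEq (Ideal.span_singleton_mul_span_singleton _ _).symm).trans <|
    (Ideal.quotientMulEquivQuotientProd _ _ ((Ideal.isCoprime_span_singleton_iff _ _).mpr
      (isCoprime_X_sub_C_of_isUnit_sub (sub_ne_zero.mpr h).isUnit))).trans <|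
    RingEquiv.prodCongr (quotientSpanXSubCAlgEquiv α).toRingEquiv
      (quotientSpanXSubCAlgEquiv β).toRingEquiv

theorem nonempty_adjoinRoot_monicQuadratic_ringEquiv_prod [NeZero (2 : F)] {b e d : F}
    (h : b ^ 2 - 4 * e = d * d) (hd : d ≠ 0) :
    Nonempty (AdjoinRoot (monicQuadratic b e) ≃+* F × F) := by
  rw [monicQuadratic_eq_mul_X_sub_C h]
  refine ⟨adjoinRootMulXSubCEquivProd fun h' => hd ?_⟩
  have h2d : (2 : F) * d = 0 := by field_simp at h'; linear_combination h'
  exact (mul_eq_zero.mp h2d).resolve_left two_ne_zero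

theorem card_adjoinRoot_monicQuadratic [Fintype F] (b e : F)
    [Fintype (AdjoinRoot (monicQuadratic b e))] :
    Fintype.card (AdjoinRoot (monicQuadratic b e)) = Fintype.card F ^ 2 := by
  rw [Module.card_eq_pow_finrank (K := F),
    (AdjoinRoot.powerBasis' (monicQuadratic_monic b e)).finrank, AdjoinRoot.powerBasis'_dim,
    natDegree_monicQuadratic]

def blockGenerator (a b c : F) : Matrix (Fin 4) (Fin 4) F :=
  !![-b, -a, 0, 0; c, 0, 0, 0; 0, 0, -b, a; 0, 0, -c, 0]

theorem aeval_blockGenerator (a b c : F) :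
    aeval (blockGenerator a b c) (monicQuadratic b (a * c)) = 0 := by
  simp only [monicQuadratic, map_add, map_mul, map_pow, aeval_X, aeval_C,
    Algebra.algebraMap_eq_smul_one]
  ext i j
  fin_cases i <;> fin_cases j <;> simp [blockGenerator, sq] <;> ring

theorem smul_one_add_smul_blockGenerator (a b c r s : F) :
    r • 1 + s • blockGenerator a b c =
      !![r - b * s, -(a * s), 0, 0;
         c * s, r, 0, 0;
         0, 0, r - b * s, a * s;
         0, 0, -(c * s), r] := by
  ext i j
  fin_cases i <;> fin_cases j <;> simp [blockGenerator] <;> ring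

theorem blockGenerator_ne_zero {a b c : F} (h : b ^ 2 - 4 * a * c ≠ 0) :
    blockGenerator a b c ≠ 0 := by
  intro h0
  have ha : a = 0 := by simpa [blockGenerator] using congrFun (congrFun h0 0) 1
  have hb : b = 0 := by simpa [blockGenerator] using congrFun (congrFun h0 0) 0
  exact h (by simp [ha, hb])

theorem det_blockMatrix (a b c r s : F) :
    (!![r - b * s, -(a * s), 0, 0;
        c * s, r, 0, 0;
        0, 0, r - b * s, a * s;
        0, 0, -(c * s), r] : Matrix (Fin 4) (Fin 4) F).det =
      (r ^ 2 - b * r * s + a * c * s ^ 2) ^ 2 := by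
  simp [Matrix.det_succ_row_zero, Fin.sum_univ_succ, Fin.succAbove]
  ring

noncomputable def blockRep (a b c : F) :
    AdjoinRoot (monicQuadratic b (a * c)) →ₐ[F] Matrix (Fin 4) (Fin 4) F :=
  AdjoinRoot.liftOfAeval _ (blockGenerator a b c) (aeval_blockGenerator a b c)

theorem blockRep_add_mul_root (a b c r s : F) :
    blockRep a b c (AdjoinRoot.of _ r + AdjoinRoot.of _ s * AdjoinRoot.root _) =
      !![r - b * s, -(a * s), 0, 0;
         c * s, r, 0, 0;
         0, 0, r - b * s, a * s;
         0, 0, -(c * s), r] := by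
  rw [← smul_one_add_smul_blockGenerator]
  simp [blockRep, Algebra.algebraMap_eq_smul_one]

theorem blockRep_injective {a b c : F} (h : b ^ 2 - 4 * a * c ≠ 0) :
    Function.Injective (blockRep a b c) := by
  rw [injective_iff_map_eq_zero]
  intro z hz
  obtain ⟨r, s, rfl⟩ := AdjoinRoot.exists_eq_add_mul_root z
  rw [blockRep_add_mul_root, ← smul_one_add_smul_blockGenerator] at hz
  have hr : r = 0 := by simpa [blockGenerator] using congrFun (congrFun hz 1) 1
  have hs : s = 0 := by
    rw [hr, zero_smul, zero_add, smul_eq_zero] at hz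
    exact hz.resolve_right (blockGenerator_ne_zero h)
  simp [hr, hs]

noncomputable def quadraticTorus (a b c : F) : Subgroup (GL (Fin 4) F) :=
  (Units.map (blockRep a b c : AdjoinRoot (monicQuadratic b (a * c)) →* _)).range

noncomputable def quadraticTorusEquivUnits {a b c : F} (h : b ^ 2 - 4 * a * c ≠ 0) :
    quadraticTorus a b c ≃* (AdjoinRoot (monicQuadratic b (a * c)))ˣ :=
  (MonoidHom.ofInjective (Units.map_injective (blockRep_injective h))).symm

theorem mem_quadraticTorus_iff {a b c : F} (g : GL (Fin 4) F) :
    g ∈ quadraticTorus a b c ↔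
      ∃ r s : F, r ^ 2 - b * r * s + a * c * s ^ 2 ≠ 0 ∧
        (g : Matrix (Fin 4) (Fin 4) F) =
          !![r - b * s, -(a * s), 0, 0;
             c * s, r, 0, 0;
             0, 0, r - b * s, a * s;
             0, 0, -(c * s), r] := by
  constructor
  · rintro ⟨u, rfl⟩
    obtain ⟨r, s, hu⟩ := AdjoinRoot.exists_eq_add_mul_root u.val
    have hg : (Units.map (blockRep a b c : _ →* Matrix (Fin 4) (Fin 4) F) u : Matrix _ _ F) =
        !![r - b * s, -(a * s), 0, 0;
           c * s, r, 0, 0;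
           0, 0, r - b * s, a * s;
           0, 0, -(c * s), r] := by
      rw [Units.coe_map, MonoidHom.coe_coe, hu, blockRep_add_mul_root]
    refine ⟨r, s, fun hD => ?_, hg⟩
    simpa [hg, det_blockMatrix, hD] using Matrix.isUnits_det_units
      (Units.map (blockRep a b c : _ →* Matrix (Fin 4) (Fin 4) F) u)
  · rintro ⟨r, s, hD, hg⟩
    refine ⟨(AdjoinRoot.isUnit_add_mul_root hD.isUnit).unit, Units.ext ?_⟩
    rw [Units.coe_map, IsUnit.unit_spec, hg, MonoidHom.coe_coe, blockRep_add_mul_root]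

end Field

theorem stmt13 {F : Type*} [Field F] [Fintype F] (hq : Odd (Fintype.card F))
    (a b c : F) (hd : b ^ 2 - 4 * a * c ≠ 0) :
    ∃ T : Subgroup (GL (Fin 4) F),
      (∀ g : GL (Fin 4) F, g ∈ T ↔ ∃ r s : F,
          r ^ 2 - b * r * s + a * c * s ^ 2 ≠ 0 ∧
          (g : Matrix (Fin 4) (Fin 4) F) =
            !![r - b * s, -(a * s), 0, 0;
               c * s, r, 0, 0;
               0, 0, r - b * s, a * s;
               0, 0, -(c * s), r]) ∧
      (IsSquare (b ^ 2 - 4 * a * c) → Nonempty (T ≃* Fˣ × Fˣ)) ∧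
      (¬ IsSquare (b ^ 2 - 4 * a * c) →
        ∀ (K : Type) [Field K] [Fintype K],
          Fintype.card K = Fintype.card F ^ 2 → Nonempty (T ≃* Kˣ)) := by
  have : NeZero (2 : F) := ⟨Ring.two_ne_zero fun hchar => by
    simpa [Nat.odd_iff.mp hq] using FiniteField.even_card_of_char_two hchar⟩
  have hdisc : b ^ 2 - 4 * (a * c) = b ^ 2 - 4 * a * c := by ring
  let A := AdjoinRoot (monicQuadratic b (a * c))
  let eT := quadraticTorusEquivUnits hd
  refine ⟨quadraticTorus a b c, mem_quadraticTorus_iff, ?_, ?_⟩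
  · rintro ⟨d, hsq⟩
    obtain ⟨e⟩ := nonempty_adjoinRoot_monicQuadratic_ringEquiv_prod (hdisc.trans hsq)
      fun h0 => hd (by simp [hsq, h0])
    exact ⟨eT.trans ((Units.mapEquiv e.toMulEquiv).trans MulEquiv.prodUnits)⟩
  · intro hns K _ _ hK
    have := Fact.mk (irreducible_monicQuadratic (hdisc ▸ hns))
    have := (monicQuadratic_monic b (a * c)).finite_adjoinRoot
    have := Module.finite_of_finite F (M := A)
    let := Fintype.ofFinite A
    have hcard : Fintype.card A = Fintype.card K := by
      rw [card_adjoinRoot_monicQuadratic, hK]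
    exact ⟨eT.trans (Units.mapEquiv (FiniteField.ringEquivOfCardEq hcard).toMulEquiv)⟩
end

section
/- Let q be odd, ξ a fixed nonsquare in F_q×, and X = [[y, z], [x, y]] a 2×2 matrix over F_q. If det(X) = y² - xz is a nonzero square, then there exist A ∈ GL(2,q) and u ∈ F_q× with uAX(A')⁻¹ equal to the identity matrix; if det(X) is a nonsquare, then there exist such A, u with uAX(A')⁻¹ = [[0, -ξ],[1, 0]]. -/
/-!
With `J = !![0, 1; 1, 0]` one has `(A')⁻¹ = !![d, b; c, a] = J Aᵀ J`, so `u A X (A')⁻¹ = Y` says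
`u A (X J) Aᵀ = Y J`: the relation is similitude of binary quadratic forms, `X J = !![z, y; y, x]`
having determinant `-(y² - x z)`. When `y² - x z = s² ≠ 0` the form is hyperbolic, and taking
two independent isotropic vectors (`(x, ±s - y)`, or `(0, 1)` and `(2y, -z)` if `x = 0`) as the
rows of `A` turns it into a multiple of `J = 1 • J`. When `y² - x z` is a nonsquare it equals
`ξ t²`, and completing the square with `A = !![x, -y; 0, t]` gives `x t² • !![-ξ, 0; 0, 1]`,
which is `x t² • !![0, -ξ; 1, 0] J`.
-/

open scoped Classical
open Matrix

lemma of_fin_two_eq_iff {α : Type*} {a b c d a' b' c' d' : α} :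
    !![a, b; c, d] = !![a', b'; c', d'] ↔ a = a' ∧ b = b' ∧ c = c' ∧ d = d' := by
  simp [and_assoc]

lemma smul_of_fin_two {α : Type*} [Mul α] (u a b c d : α) :
    u • !![a, b; c, d] = !![u * a, u * b; u * c, u * d] :=
  eta_fin_two _

section

variable {F : Type*} [Field F]

def TwistedEquiv (X Y : Matrix (Fin 2) (Fin 2) F) : Prop :=
  ∃ (A : Matrix (Fin 2) (Fin 2) F) (u : F), A.det ≠ 0 ∧ u ≠ 0 ∧
    u • (A * X * ((A.det)⁻¹ • !![A 0 0, -(A 0 1); -(A 1 0), A 1 1])⁻¹) = Y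

lemma inv_smul_of_fin_two {a b c d : F} (h : a * d - b * c ≠ 0) :
    ((a * d - b * c)⁻¹ • !![a, -b; -c, d])⁻¹ = !![d, b; c, a] := by
  refine inv_eq_right_inv ?_
  rw [smul_mul, mul_fin_two, smul_of_fin_two, one_fin_two, of_fin_two_eq_iff]
  refine ⟨?_, ?_, ?_, ?_⟩ <;> field_simp <;> ring

lemma TwistedEquiv.of_mul_eq {X Y : Matrix (Fin 2) (Fin 2) F} {a b c d u : F}
    (hA : a * d - b * c ≠ 0) (hu : u ≠ 0) (h : u • (!![a, b; c, d] * X * !![d, b; c, a]) = Y) :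
    TwistedEquiv X Y := by
  refine ⟨!![a, b; c, d], u, by rwa [det_fin_two_of], hu, ?_⟩
  rw [det_fin_two_of]
  change u • (_ * X * ((a * d - b * c)⁻¹ • !![a, -b; -c, d])⁻¹) = Y
  rwa [inv_smul_of_fin_two hA]

lemma twistedEquiv_one_of_eq_sq {x y z s : F} (h2 : (2 : F) ≠ 0) (hs : y ^ 2 - x * z = s ^ 2)
    (hs0 : s ≠ 0) : TwistedEquiv !![y, z; x, y] 1 := by
  rcases eq_or_ne x 0 with rfl | hx
  · have hy : y ≠ 0 := by
      rintro rfl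
      exact hs0 (pow_eq_zero_iff two_ne_zero |>.mp (by linear_combination -hs))
    refine TwistedEquiv.of_mul_eq (a := 0) (b := 1) (c := 2 * y) (d := -z) (u := (2 * y ^ 2)⁻¹)
      (by simpa using mul_ne_zero h2 hy) (by simp [h2, hy]) ?_
    rw [mul_fin_two, mul_fin_two, smul_of_fin_two, one_fin_two, of_fin_two_eq_iff]
    refine ⟨?_, ?_, ?_, ?_⟩ <;> field_simp <;> ring
  · refine TwistedEquiv.of_mul_eq (a := x) (b := s - y) (c := x) (d := -s - y)
      (u := (-(2 * x * s ^ 2))⁻¹) ?_ (by simp [h2, hx, hs0]) ?_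
    · intro h
      exact mul_ne_zero (mul_ne_zero h2 hs0) hx (by linear_combination -h)
    rw [mul_fin_two, mul_fin_two, smul_of_fin_two, one_fin_two, of_fin_two_eq_iff]
    refine ⟨?_, ?_, ?_, ?_⟩ <;> field_simp <;> linear_combination hs

lemma twistedEquiv_of_eq_mul_sq {x y z ξ t : F} (hx : x ≠ 0) (ht : t ≠ 0)
    (h : y ^ 2 - x * z = ξ * t ^ 2) : TwistedEquiv !![y, z; x, y] !![0, -ξ; 1, 0] := by
  refine TwistedEquiv.of_mul_eq (a := x) (b := -y) (c := 0) (d := t) (u := (t ^ 2 * x)⁻¹)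
    (by simp [hx, ht]) (by simp [hx, ht]) ?_
  rw [mul_fin_two, mul_fin_two, smul_of_fin_two, of_fin_two_eq_iff]
  refine ⟨?_, ?_, ?_, ?_⟩ <;> field_simp
  · ring
  · linear_combination -h
  · ring
  · ring

end

section FiniteField

variable {F : Type*} [Field F] [Fintype F]

lemma two_ne_zero_of_odd_card (h : Odd (Fintype.card F)) : (2 : F) ≠ 0 :=
  Ring.two_ne_zero fun h2 => by
    have := FiniteField.even_card_of_char_two h2
    rw [Nat.odd_iff] at h
    omega

lemma exists_eq_mul_sq_of_not_isSquare {a ξ : F} (ha : ¬IsSquare a) (hξ : ¬IsSquare ξ) :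
    ∃ t, a = ξ * t ^ 2 := by
  have hξ0 : ξ ≠ 0 := by rintro rfl; exact hξ IsSquare.zero
  have ha0 : a ≠ 0 := by rintro rfl; exact ha IsSquare.zero
  have hχ : quadraticChar F (a * ξ) = 1 := by
    rw [map_mul, quadraticChar_neg_one_iff_not_isSquare.mpr ha,
      quadraticChar_neg_one_iff_not_isSquare.mpr hξ]
    norm_num
  obtain ⟨w, hw⟩ := (quadraticChar_one_iff_isSquare (mul_ne_zero ha0 hξ0)).mp hχ
  exact ⟨w / ξ, by field_simp; linear_combination hw⟩

end FiniteField

theorem stmt17_general {F : Type*} [Field F] [Fintype F] (hq : Odd (Fintype.card F))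
    (ξ : F) (hξ : ¬ IsSquare ξ)
    (x y z : F) (X : Matrix (Fin 2) (Fin 2) F) (hX : X = !![y, z; x, y]) :
    (IsSquare (y ^ 2 - x * z) ∧ y ^ 2 - x * z ≠ 0 →
      ∃ (A : Matrix (Fin 2) (Fin 2) F) (u : F), A.det ≠ 0 ∧ u ≠ 0 ∧
        u • (A * X * ((A.det)⁻¹ • !![A 0 0, -(A 0 1); -(A 1 0), A 1 1])⁻¹) =
          (1 : Matrix (Fin 2) (Fin 2) F)) ∧
    (¬ IsSquare (y ^ 2 - x * z) →
      ∃ (A : Matrix (Fin 2) (Fin 2) F) (u : F), A.det ≠ 0 ∧ u ≠ 0 ∧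
        u • (A * X * ((A.det)⁻¹ • !![A 0 0, -(A 0 1); -(A 1 0), A 1 1])⁻¹) =
          !![0, -ξ; 1, 0]) := by
  subst hX
  refine ⟨fun ⟨⟨s, hs⟩, hd⟩ => ?_, fun hd => ?_⟩
  · have hs0 : s ≠ 0 := by rintro rfl; exact hd (by simpa using hs)
    exact twistedEquiv_one_of_eq_sq (two_ne_zero_of_odd_card hq) (by rw [hs, sq]) hs0
  · have hx : x ≠ 0 := by rintro rfl; exact hd ⟨y, by ring⟩
    obtain ⟨t, ht⟩ := exists_eq_mul_sq_of_not_isSquare hd hξ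
    have ht0 : t ≠ 0 := by rintro rfl; exact hd (by simp [ht])
    exact twistedEquiv_of_eq_mul_sq hx ht0 ht

theorem stmt17 {F : Type*} [Field F] [Fintype F] (hq : Odd (Fintype.card F))
    (ξ : F) (hξ0 : ξ ≠ 0) (hξ : ¬ IsSquare ξ)
    (x y z : F) (X : Matrix (Fin 2) (Fin 2) F) (hX : X = !![y, z; x, y]) :
    (IsSquare (y ^ 2 - x * z) ∧ y ^ 2 - x * z ≠ 0 →
      ∃ (A : Matrix (Fin 2) (Fin 2) F) (u : F), A.det ≠ 0 ∧ u ≠ 0 ∧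
        u • (A * X * ((A.det)⁻¹ • !![A 0 0, -(A 0 1); -(A 1 0), A 1 1])⁻¹) =
          (1 : Matrix (Fin 2) (Fin 2) F)) ∧
    (¬ IsSquare (y ^ 2 - x * z) →
      ∃ (A : Matrix (Fin 2) (Fin 2) F) (u : F), A.det ≠ 0 ∧ u ≠ 0 ∧
        u • (A * X * ((A.det)⁻¹ • !![A 0 0, -(A 0 1); -(A 1 0), A 1 1])⁻¹) =
          !![0, -ξ; 1, 0]) :=
  stmt17_general hq ξ hξ x y z X hX
end

section
/- Let q be odd and ψ a nontrivial additive character of F_q. Then (1/2) ∑_{u,x ∈ F_q×} ∑_{y ∈ F_q} ψ(u(y² - x² - 1)) = -q. -/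
open scoped Classical

/-!
For `t ∈ F`, `∑ u ∈ Fˣ, ψ (u t)` equals `q - 1` if `t = 0` and `-1` otherwise, so the sum is
`q N - q (q - 1)`, where `N` counts the points of the hyperbola `y² - x² = 1` with `x ≠ 0`.
Via `s = y + x` (with inverse `s ↦ ((s - s⁻¹)/2, (s + s⁻¹)/2)`) the whole hyperbola is in bijection
with `Fˣ`, and exactly two of its points, `(0, ±1)`, have `x = 0`; hence `N = q - 3`.
-/

open Finset

theorem Fintype.sum_units_eq_sum_sub {G₀ M : Type*} [GroupWithZero G₀] [Fintype G₀]
    [AddCommGroup M] (f : G₀ → M) : ∑ u : G₀ˣ, f u = ∑ a, f a - f 0 := by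
  rw [eq_sub_iff_add_eq, ← Fintype.sum_subtype_add_sum_subtype (· ≠ 0) f]
  congr 1
  · exact Fintype.sum_equiv unitsEquivNeZero _ _ fun _ => rfl
  · rw [← Finset.sum_subtype {0} (by simp), sum_singleton]

section FiniteField

variable {F : Type*} [Field F] [Fintype F]

theorem AddChar.sum_units_mulShift {R : Type*} [CommRing R] [IsDomain R] {ψ : AddChar F R}
    (hψ : ψ.IsPrimitive) (t : F) :
    ∑ u : Fˣ, ψ (u * t) = (if t = 0 then (Fintype.card F : R) else 0) - 1 := by
  rw [Fintype.sum_units_eq_sum_sub (fun a => ψ (a * t)), AddChar.sum_mulShift t hψ, zero_mul,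
    AddChar.map_zero_eq_one, Nat.cast_ite, Nat.cast_zero]

theorem AddChar.sum_sum_units_mulShift {R : Type*} [CommRing R] [IsDomain R] {ψ : AddChar F R}
    (hψ : ψ.IsPrimitive) {ι : Type*} [Fintype ι] (g : ι → F) :
    ∑ i, ∑ u : Fˣ, ψ (u * g i) =
      Fintype.card F * #{i | g i = 0} - Fintype.card ι := by
  simp only [AddChar.sum_units_mulShift hψ, sum_sub_distrib, sum_ite, sum_const_zero, add_zero,
    sum_const, card_univ, nsmul_eq_mul, mul_one]
  ring

theorem card_sq_sub_sq_eq_one (h2 : (2 : F) ≠ 0) :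
    #{p : F × F | p.2 ^ 2 - p.1 ^ 2 = 1} = Fintype.card F - 1 := by
  rw [← Fintype.card_units, Fintype.card, eq_comm]
  have hfactor (p : F × F) : p.2 ^ 2 - p.1 ^ 2 = (p.2 + p.1) * (p.2 - p.1) := by ring
  refine card_bij' (fun s _ => (((s : F) - (s : F)⁻¹) / 2, ((s : F) + (s : F)⁻¹) / 2))
    (fun p hp => Units.mk0 (p.2 + p.1) (left_ne_zero_of_mul_eq_one
      (hfactor p ▸ (mem_filter.1 hp).2))) (fun s _ => ?_) (fun _ _ => mem_univ _)
    (fun s _ => ?_) (fun p hp => ?_)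
  · simp only [mem_filter, mem_univ, true_and]
    field_simp
    ring
  · ext
    simp only [Units.val_mk0]
    field_simp
    ring
  · have hp' : (p.2 + p.1) * (p.2 - p.1) = 1 := hfactor p ▸ (mem_filter.1 hp).2
    have hinv : (p.2 + p.1)⁻¹ = p.2 - p.1 := inv_eq_of_mul_eq_one_right hp'
    ext <;> simp only [Units.val_mk0, hinv] <;> field_simp <;> ring

theorem card_sq_eq_one (h : ringChar F ≠ 2) : #{y : F | y ^ 2 = 1} = 2 := by
  have : ({y : F | y ^ 2 = 1} : Finset F) = {1, -1} := by
    ext y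
    simp [sq_eq_one_iff]
  rw [this, card_pair (Ring.neg_one_ne_one_of_char_ne_two h).symm]

end FiniteField

theorem stmt18 {F : Type*} [Field F] [Fintype F] (hq : Odd (Fintype.card F))
    (ψ : AddChar F ℂ) (hψ : ψ ≠ 1) :
    (1 / 2 : ℂ) * ∑ u : Fˣ, ∑ x : Fˣ, ∑ y : F,
        ψ ((u : F) * (y ^ 2 - (x : F) ^ 2 - 1)) = -(Fintype.card F : ℂ) := by
  have hprim := AddChar.IsPrimitive.of_ne_one hψ
  have hchar : ringChar F ≠ 2 := by
    rw [Ne, FiniteField.even_card_iff_char_two, ← Nat.even_iff]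
    exact Nat.not_even_iff_odd.mpr hq
  have hswap : ∑ u : Fˣ, ∑ x : Fˣ, ∑ y : F, ψ ((u : F) * (y ^ 2 - (x : F) ^ 2 - 1)) =
      ∑ x : Fˣ, ∑ y : F, ∑ u : Fˣ, ψ ((u : F) * (y ^ 2 - (x : F) ^ 2 - 1)) := by
    rw [sum_comm]
    exact sum_congr rfl fun _ _ => sum_comm
  rw [hswap, Fintype.sum_units_eq_sum_sub fun x : F =>
      ∑ y : F, ∑ u : Fˣ, ψ ((u : F) * (y ^ 2 - x ^ 2 - 1)),
    ← Fintype.sum_prod_type' fun x y => ∑ u : Fˣ, ψ ((u : F) * (y ^ 2 - x ^ 2 - 1)),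
    AddChar.sum_sum_units_mulShift hprim, AddChar.sum_sum_units_mulShift hprim]
  simp only [sub_eq_zero, ne_eq, OfNat.ofNat_ne_zero, not_false_eq_true, zero_pow, sub_zero]
  rw [card_sq_sub_sq_eq_one (Ring.two_ne_zero hchar), card_sq_eq_one hchar]
  push_cast [Nat.cast_sub Fintype.card_pos, Fintype.card_prod]
  ring
end
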